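/- arXiv:2211.13913 — 6 statements merged into one kernel-verified Lean document; each statement's English description precedes it below -/
import Mathlib

section
/- Let A = ∏_p A_p be a product over all primes p of profinite groups A_p, each equipped with its normalized Haar probability measure ν_p, and let ν = ∏_p ν_p be the product measure on A. For each prime p let χ_p : A_p → {±1} be a continuous group homomorphism (a quadratic character), with χ_p trivial for all but finitely many p, and let χ = ∏_p χ_p : A → {±1} (i.e. χ((x_p)_p) = ∏_p χ_p(x_p)); assume χ is non-trivial. Let G = ker χ. For each prime p let S_p ⊆ A_p be a ν_p-measurable subset with ν_p(S_p) > 0, and let S = ∏_p S_p ⊆ A. Then ν(G ∩ S)/ν(G) = (1 + ∏_p (1/ν_p(S_p)) ∫_{S_p} χ_p dν_p) · ν(S)/ν(A), where the infinite products are well defined because all but finitely many factors equal 1 (respectively ν_p(S_p)). -/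
/-! With `F` the finite set of primes where `χ_p ≠ 1`, the character
`ψ x = ∏_{p ∈ F} χ_p(x_p)` takes the values `±1` and some translate of it is `-ψ`, so
`∫ ψ dν_A = 0`. Since `1_G = (1 + ψ) / 2`, this gives `ν_A(G) = 1/2` and
`ν_A(G ∩ S) = (ν_A(S) + ∫_S ψ) / 2`.

Write `S = C ∩ ∏_{p ∈ F} S_p` with `C = ∏_{p ∉ F} S_p`. If a set `C` is invariant under
translations in the coordinate `q`, the push-forward of `ν_A|_C` to `A_q` is left invariant,
hence equals `ν_A(C) • ν_q` by uniqueness of Haar measure on the compact group `A_q` (uniqueness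
is only available on the factors: the product σ-algebra on `A` need not be Borel). Peeling off
the coordinates of `F` one at a time gives `∫_S ψ = ν_A(C) ∏_{p ∈ F} ∫_{S_p} χ_p` and
`ν_A(S) = ν_A(C) ∏_{p ∈ F} ν_p(S_p)`. -/

open MeasureTheory

theorem Finset.prod_eq_one_or_eq_neg_one {ι R : Type*} [CommRing R] [NoZeroDivisors R]
    {s : Finset ι} {f : ι → R} (h : ∀ i ∈ s, f i = 1 ∨ f i = -1) :
    ∏ i ∈ s, f i = 1 ∨ ∏ i ∈ s, f i = -1 := by
  rw [← mul_self_eq_one_iff, ← Finset.prod_mul_distrib]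
  exact Finset.prod_eq_one fun i hi => mul_self_eq_one_iff.2 (h i hi)

section SignSplit

variable {X : Type*} [MeasurableSpace X] {μ : Measure X} {s : X → ℝ}

theorem integrable_of_forall_eq_one_or_eq_neg_one [IsFiniteMeasure μ] (hs : Measurable s)
    (hs1 : ∀ x, s x = 1 ∨ s x = -1) : Integrable s μ :=
  (integrable_const 1).mono' hs.aestronglyMeasurable
    (ae_of_all _ fun x => by rcases hs1 x with h | h <;> simp [h])

theorem setIntegral_sign_mul_eq_sub (hs : Measurable s) (hs1 : ∀ x, s x = 1 ∨ s x = -1)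
    {g : X → ℝ} (hg : Integrable g μ) {Y : Set X} (hY : MeasurableSet Y) :
    ∫ x in Y, s x * g x ∂μ =
      ∫ x in {x | s x = 1} ∩ Y, g x ∂μ - ∫ x in {x | s x = -1} ∩ Y, g x ∂μ := by
  have hY_eq : Y = ({x | s x = 1} ∩ Y) ∪ ({x | s x = -1} ∩ Y) := by
    ext x; rcases hs1 x with h | h <;> simp [h]
  have hdisj : Disjoint ({x | s x = 1} ∩ Y) ({x | s x = -1} ∩ Y) :=
    Set.disjoint_left.2 fun x h₁ h₂ => by
      have : (1 : ℝ) = -1 := h₁.1.out.symm.trans h₂.1.out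
      norm_num at this
  have hsg : Integrable (fun x => s x * g x) μ := by
    refine hg.bdd_mul hs.aestronglyMeasurable (c := 1) (ae_of_all _ fun x => ?_)
    rcases hs1 x with h | h <;> simp [h]
  conv_lhs => rw [hY_eq]
  rw [setIntegral_union hdisj ((hs (measurableSet_singleton _)).inter hY) hsg.integrableOn
    hsg.integrableOn, sub_eq_add_neg, ← integral_neg]
  congr 1 <;> refine setIntegral_congr_fun ((hs (measurableSet_singleton _)).inter hY)
    fun x hx => ?_
  · simp [hx.1.out]
  · simp [hx.1.out]

theorem measureReal_setOf_eq_one_inter [IsFiniteMeasure μ] (hs : Measurable s)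
    (hs1 : ∀ x, s x = 1 ∨ s x = -1) {Y : Set X} :
    μ.real ({x | s x = 1} ∩ Y) = (μ.real Y + ∫ x in Y, s x ∂μ) / 2 := by
  have hG : MeasurableSet {x | s x = 1} := hs (measurableSet_singleton 1)
  have hind : {x | s x = 1}.indicator 1 = fun x => (1 + s x) / 2 := by
    ext x; rcases hs1 x with h | h <;> simp [Set.indicator, h]; norm_num
  rw [← measureReal_restrict_apply hG, ← integral_indicator_one hG, hind, integral_div,
    integral_add (integrable_const _)
      (integrable_of_forall_eq_one_or_eq_neg_one hs hs1).integrableOn, integral_const,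
    smul_eq_mul, mul_one, measureReal_restrict_apply_univ]

theorem measureReal_inter_div_measureReal_setOf_eq_one [IsProbabilityMeasure μ]
    (hs : Measurable s) (hs1 : ∀ x, s x = 1 ∨ s x = -1) (hs0 : ∫ x, s x ∂μ = 0)
    (Y : Set X) :
    μ.real ({x | s x = 1} ∩ Y) / μ.real {x | s x = 1} = μ.real Y + ∫ x in Y, s x ∂μ := by
  rw [measureReal_setOf_eq_one_inter hs hs1, ← Set.inter_univ {x | s x = 1},
    measureReal_setOf_eq_one_inter hs hs1, Measure.restrict_univ, hs0, probReal_univ]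
  ring

end SignSplit

section PiHaar

variable {ι : Type*} [DecidableEq ι] {A : ι → Type*} [∀ i, Group (A i)]

theorem preimage_mulSingle_mul_pi_of_notMem {s : Set ι} {B : ∀ i, Set (A i)} {i : ι}
    (hi : i ∉ s) (g : A i) :
    (Pi.mulSingle i g * ·) ⁻¹' s.pi B = s.pi B := by
  ext x
  refine forall₂_congr fun j hj => ?_
  simp [Pi.mulSingle_eq_of_ne (ne_of_mem_of_not_mem hj hi)]

theorem preimage_mulSingle_mul_eval_preimage_of_ne {i j : ι} (hij : i ≠ j) (g : A j)
    (T : Set (A i)) :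
    (Pi.mulSingle j g * ·) ⁻¹' (Function.eval i ⁻¹' T) = Function.eval i ⁻¹' T := by
  ext x
  simp [Pi.mulSingle_eq_of_ne hij]

variable [∀ i, TopologicalSpace (A i)] [∀ i, IsTopologicalGroup (A i)]
  [∀ i, CompactSpace (A i)] [∀ i, MeasurableSpace (A i)] [∀ i, BorelSpace (A i)]
  {ν : ∀ i, Measure (A i)} [∀ i, (ν i).IsHaarMeasure] [∀ i, IsProbabilityMeasure (ν i)]
  {μ : Measure (∀ i, A i)} [μ.IsMulLeftInvariant] [IsFiniteMeasure μ]

theorem map_eval_restrict_eq_smul {i : ι} {C : Set (∀ i, A i)} (hC : MeasurableSet C)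
    (hCinv : ∀ g : A i, (Pi.mulSingle i g * ·) ⁻¹' C = C) :
    (μ.restrict C).map (Function.eval i) = μ C • ν i := by
  set m := (μ.restrict C).map (Function.eval i)
  have : m.IsMulLeftInvariant := by
    refine ⟨fun g => ?_⟩
    have hT : Measurable (Pi.mulSingle i g * · : (∀ i, A i) → ∀ i, A i) :=
      measurable_const_mul _
    have hTC : (μ.restrict C).map (Pi.mulSingle i g * ·) = μ.restrict C := by
      conv_lhs => rw [← hCinv g]
      rw [← Measure.restrict_map hT hC, map_mul_left_eq_self]
    have hcomm : (g * ·) ∘ Function.eval i = Function.eval i ∘ (Pi.mulSingle i g * ·) := by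
      ext x; simp
    rw [Measure.map_map (measurable_const_mul g) (measurable_pi_apply i), hcomm,
      ← Measure.map_map (measurable_pi_apply i) hT, hTC]
  have hm := Measure.isMulInvariant_eq_smul_of_compactSpace m (ν i)
  have hmC : m Set.univ = μ C := by
    rw [Measure.map_apply (measurable_pi_apply i) MeasurableSet.univ, Set.preimage_univ,
      Measure.restrict_apply_univ]
  rw [hm, Measure.smul_apply, measure_univ, ENNReal.smul_def, smul_eq_mul, mul_one] at hmC
  rw [hm, ← hmC, ENNReal.smul_def]

theorem measureReal_inter_eval_preimage {i : ι} {C : Set (∀ i, A i)} (hC : MeasurableSet C)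
    (hCinv : ∀ g : A i, (Pi.mulSingle i g * ·) ⁻¹' C = C) {B : Set (A i)}
    (hB : MeasurableSet B) :
    μ.real (C ∩ Function.eval i ⁻¹' B) = μ.real C * (ν i).real B := by
  have := congrArg (fun m => m.real B) (map_eval_restrict_eq_smul (ν := ν) (μ := μ) hC hCinv)
  simp only [map_measureReal_apply (measurable_pi_apply i) hB, measureReal_restrict_apply
    (measurable_pi_apply i hB)] at this
  rw [Set.inter_comm, this, measureReal_def, Measure.smul_apply, smul_eq_mul,
    ENNReal.toReal_mul, measureReal_def, measureReal_def]

theorem setIntegral_inter_pi_prod (f : ∀ i, A i → ℝ) (hf : ∀ i, Measurable (f i))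
    (hf1 : ∀ i x, f i x = 1 ∨ f i x = -1) {B : ∀ i, Set (A i)}
    (hB : ∀ i, MeasurableSet (B i)) (E : Finset ι) {C : Set (∀ i, A i)} (hC : MeasurableSet C)
    (hCinv : ∀ i ∈ E, ∀ g : A i, (Pi.mulSingle i g * ·) ⁻¹' C = C) :
    ∫ x in C ∩ (E : Set ι).pi B, ∏ i ∈ E, f i (x i) ∂μ =
      μ.real C * ∏ i ∈ E, ∫ y in B i, f i y ∂ν i := by
  induction E using Finset.induction_on generalizing C with
  | empty => simp
  | @insert q E hq ih =>
    -- Split according to the sign of `f q (x q)`; the pieces `C' ε` stay invariant in the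
    -- coordinates of `E`, so the induction hypothesis applies to them.
    let C' : ℝ → Set (∀ i, A i) := fun ε =>
      C ∩ Function.eval q ⁻¹' ({y | f q y = ε} ∩ B q)
    have hC'm : ∀ ε, MeasurableSet (C' ε) := fun ε =>
      hC.inter (measurable_pi_apply q ((hf q (measurableSet_singleton ε)).inter (hB q)))
    have hC'inv : ∀ ε, ∀ i ∈ E, ∀ g : A i, (Pi.mulSingle i g * ·) ⁻¹' C' ε = C' ε :=
      fun ε i hi g => by
        rw [Set.preimage_inter, hCinv i (Finset.mem_insert_of_mem hi) g,
          preimage_mulSingle_mul_eval_preimage_of_ne (ne_of_mem_of_not_mem hi hq).symm]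
    have hpiece : ∀ ε,
        {x : ∀ i, A i | f q (x q) = ε} ∩ (C ∩ (↑(insert q E) : Set ι).pi B) =
          C' ε ∩ (E : Set ι).pi B := by
      intro ε
      ext x
      simp only [C', Finset.coe_insert, Set.insert_pi, Set.mem_inter_iff, Set.mem_ofPred_eq,
        Set.mem_preimage, Function.eval]
      tauto
    have hprod_int : Integrable (fun x : ∀ i, A i => ∏ i ∈ E, f i (x i)) μ :=
      integrable_of_forall_eq_one_or_eq_neg_one
        (Finset.measurable_prod _ fun i _ => (hf i).comp (measurable_pi_apply i))
        fun x => Finset.prod_eq_one_or_eq_neg_one fun i _ => hf1 i (x i)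
    have hC'real : ∀ ε, μ.real (C' ε) = μ.real C * (ν q).real ({y | f q y = ε} ∩ B q) :=
      fun ε => measureReal_inter_eval_preimage hC (hCinv q (Finset.mem_insert_self q E))
        ((hf q (measurableSet_singleton ε)).inter (hB q))
    simp_rw [Finset.prod_insert hq]
    rw [setIntegral_sign_mul_eq_sub (s := fun x : ∀ i, A i => f q (x q))
        ((hf q).comp (measurable_pi_apply q)) (fun x => hf1 q (x q)) hprod_int
        (hC.inter (MeasurableSet.pi (Finset.countable_toSet _) fun i _ => hB i)),
      hpiece, hpiece, ih (hC'm 1) (hC'inv 1), ih (hC'm (-1)) (hC'inv (-1)), hC'real, hC'real]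
    have hfq := setIntegral_sign_mul_eq_sub (μ := ν q) (hf q) (hf1 q) (integrable_const 1)
      (hB q)
    simp only [mul_one, setIntegral_const, smul_eq_mul] at hfq
    rw [hfq]
    ring

theorem setIntegral_univ_pi_prod [Countable ι] (f : ∀ i, A i → ℝ)
    (hf : ∀ i, Measurable (f i)) (hf1 : ∀ i x, f i x = 1 ∨ f i x = -1) {B : ∀ i, Set (A i)}
    (hB : ∀ i, MeasurableSet (B i)) (E : Finset ι) :
    ∫ x in Set.univ.pi B, ∏ i ∈ E, f i (x i) ∂μ =
      μ.real ((E : Set ι)ᶜ.pi B) * ∏ i ∈ E, ∫ y in B i, f i y ∂ν i := by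
  rw [← Set.compl_union_self (E : Set ι), Set.union_pi]
  exact setIntegral_inter_pi_prod f hf hf1 hB E
    (MeasurableSet.pi (Set.to_countable _) fun i _ => hB i)
    fun i hi g => preimage_mulSingle_mul_pi_of_notMem (Set.notMem_compl_iff.2 hi) g

end PiHaar

theorem character_sums_density_general
    (A : Nat.Primes → Type*) [∀ p, Group (A p)] [∀ p, TopologicalSpace (A p)]
    [∀ p, IsTopologicalGroup (A p)] [∀ p, CompactSpace (A p)]
    [∀ p, MeasurableSpace (A p)] [∀ p, BorelSpace (A p)]
    (ν : ∀ p, Measure (A p))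
    [∀ p, (ν p).IsHaarMeasure] [∀ p, IsProbabilityMeasure (ν p)]
    (νA : Measure (∀ p, A p)) [νA.IsHaarMeasure] [IsProbabilityMeasure νA]
    (χ : ∀ p, A p →* ℝ) (hχcont : ∀ p, Continuous (χ p))
    (hχquad : ∀ p x, χ p x = 1 ∨ χ p x = -1)
    (hχfin : {p | χ p ≠ 1}.Finite)
    (hχnontriv : ∃ x : ∀ p, A p, (∏ᶠ p, χ p (x p)) ≠ 1)
    (S : ∀ p, Set (A p)) (hSmeas : ∀ p, MeasurableSet (S p))
    (hSpos : ∀ p, 0 < ν p (S p)) :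
    (νA ({x | (∏ᶠ p, χ p (x p)) = 1} ∩ Set.univ.pi S)).toReal /
        (νA {x | (∏ᶠ p, χ p (x p)) = 1}).toReal =
      (1 + ∏ᶠ p, (1 / (ν p (S p)).toReal) * ∫ x in S p, χ p x ∂ν p) *
        ((νA (Set.univ.pi S)).toReal / (νA Set.univ).toReal) := by
  set F := hχfin.toFinset
  set ψ : (∀ p, A p) → ℝ := fun x => ∏ p ∈ F, χ p (x p)
  have hψ : ∀ x, ∏ᶠ p, χ p (x p) = ψ x := fun x =>
    finprod_eq_prod_of_mulSupport_subset _ fun p hp =>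
      hχfin.mem_toFinset.2 fun h => hp (by simp [h])
  have hψm : Measurable ψ :=
    Finset.measurable_prod _ fun p _ => (hχcont p).measurable.comp (measurable_pi_apply p)
  have hψ1 : ∀ x, ψ x = 1 ∨ ψ x = -1 := fun x =>
    Finset.prod_eq_one_or_eq_neg_one fun p _ => hχquad p (x p)
  obtain ⟨g, hg⟩ := hχnontriv
  have hψ_integral : ∫ x, ψ x ∂νA = 0 :=
    integral_eq_zero_of_mul_left_eq_neg (g := g) fun x => by
      simp only [ψ, Pi.mul_apply, map_mul, Finset.prod_mul_distrib]
      rw [show ∏ p ∈ F, χ p (g p) = -1 from (hψ1 g).resolve_left (hψ g ▸ hg), neg_one_mul]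
  have hS := setIntegral_univ_pi_prod (ν := ν) (μ := νA) (fun _ _ => (1 : ℝ))
    (fun _ => measurable_const) (fun _ _ => Or.inl rfl) hSmeas F
  have hψS := setIntegral_univ_pi_prod (ν := ν) (μ := νA) (fun p => χ p)
    (fun p => (hχcont p).measurable) hχquad hSmeas F
  simp only [Finset.prod_const_one, setIntegral_const, smul_eq_mul, mul_one] at hS
  have hνS : ∀ p, (ν p).real (S p) ≠ 0 := fun p =>
    (ENNReal.toReal_pos (hSpos p).ne' (measure_ne_top _ _)).ne'
  have hfinprod : ∏ᶠ p, (1 / (ν p).real (S p)) * ∫ x in S p, χ p x ∂ν p =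
      ∏ p ∈ F, (1 / (ν p).real (S p)) * ∫ x in S p, χ p x ∂ν p := by
    refine finprod_eq_prod_of_mulSupport_subset _ fun p hp =>
      hχfin.mem_toFinset.2 fun h => hp ?_
    simp [h, hνS p]
  simp only [hψ, ← measureReal_def]
  rw [measureReal_inter_div_measureReal_setOf_eq_one hψm hψ1 hψ_integral, hS, hfinprod,
    Finset.prod_mul_distrib, Finset.prod_div_distrib, Finset.prod_const_one, probReal_univ, hψS]
  have := Finset.prod_ne_zero_iff.2 fun p (_ : p ∈ F) => hνS p
  field_simp

/-- **Lenstra–Moree–Stevenhagen character sums theorem** (Theorem 3.3 of LMS).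
`A = ∏_p A_p` is a product of profinite groups indexed by the primes, each `A_p` carrying
its normalized Haar probability measure `ν p`; `ν_A` is the normalized Haar probability
measure on the (profinite) product `A`; `χ = ∏_p χ_p` is a non-trivial quadratic character
built from continuous local quadratic characters `χ_p`, almost all trivial;
`G = ker χ`; and `S = ∏_p S_p` for measurable `S_p ⊆ A_p` of positive measure. Then
`ν(G ∩ S)/ν(G) = (1 + ∏_p (1/ν_p(S_p)) ∫_{S_p} χ_p dν_p) · ν(S)/ν(A)`. -/
theorem character_sums_density
    (A : Nat.Primes → Type*) [∀ p, Group (A p)] [∀ p, TopologicalSpace (A p)]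
    [∀ p, IsTopologicalGroup (A p)] [∀ p, CompactSpace (A p)] [∀ p, T2Space (A p)]
    [∀ p, TotallyDisconnectedSpace (A p)]
    [∀ p, MeasurableSpace (A p)] [∀ p, BorelSpace (A p)]
    (ν : ∀ p, Measure (A p))
    [∀ p, (ν p).IsHaarMeasure] [∀ p, IsProbabilityMeasure (ν p)]
    (νA : Measure (∀ p, A p)) [νA.IsHaarMeasure] [IsProbabilityMeasure νA]
    (χ : ∀ p, A p →* ℝ) (hχcont : ∀ p, Continuous (χ p))
    (hχquad : ∀ p x, χ p x = 1 ∨ χ p x = -1)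
    (hχfin : {p | χ p ≠ 1}.Finite)
    (hχnontriv : ∃ x : ∀ p, A p, (∏ᶠ p, χ p (x p)) ≠ 1)
    (S : ∀ p, Set (A p)) (hSmeas : ∀ p, MeasurableSet (S p))
    (hSpos : ∀ p, 0 < ν p (S p)) :
    (νA ({x | (∏ᶠ p, χ p (x p)) = 1} ∩ Set.univ.pi S)).toReal /
        (νA {x | (∏ᶠ p, χ p (x p)) = 1}).toReal =
      (1 + ∏ᶠ p, (1 / (ν p (S p)).toReal) * ∫ x in S p, χ p x ∂ν p) *
        ((νA (Set.univ.pi S)).toReal / (νA Set.univ).toReal) :=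
  character_sums_density_general A ν νA χ hχcont hχquad hχfin hχnontriv S hSmeas hSpos
end

section
/- Let ((G(n))_{n≥1}, (i_{n₁,n₂})_{n₁∣n₂}) and ((A(n))_{n≥1}, (j_{n₁,n₂})_{n₁∣n₂}) be inverse systems of finite groups indexed by the positive integers ordered by divisibility, with all transition maps surjective group homomorphisms. Assume that for each n there is an injective group homomorphism r_n : G(n) → A(n) compatible with the transition maps, i.e. r_{n₁} ∘ i_{n₁,n₂} = j_{n₁,n₂} ∘ r_{n₂} whenever n₁ ∣ n₂. Let G = lim← G(n) and A = lim← A(n) be the profinite inverse limits, r : G → A the induced injective continuous homomorphism, π_{A,n} : A → A(n) the canonical projections, and ν_A the normalized Haar probability measure on A. Let m ≥ 1, let μ_m ⊆ ℂ^× be the group of m-th roots of unity, and suppose χ : A → μ_m is a continuous homomorphism such that the sequence 1 → G → A → μ_m → 1 (with maps r and χ) is exact, i.e. χ is surjective and ker χ = r(G). Let g : ℕ≥1 → ℂ satisfy ∑_{n≥1} |g(n)|/#G(n) < ∞ and set g̃ = ∑_{n≥1} g(n)·1_{ker π_{A,n}} (pointwise sum of scaled indicator functions). Then g̃ ∈ L¹(ν_A)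 and ∑_{n≥1} g(n)/#G(n) = ∑_{i=0}^{m−1} ∫_A g̃ · χ^i dν_A. -/
open MeasureTheory

/-- The inverse limit of a system of groups indexed by `ℕ+` ordered by divisibility,
realized as the subgroup of compatible sequences in the product. -/
def dvdLimit (A : ℕ+ → Type) [∀ n, Group (A n)]
    (j : ∀ n₁ n₂ : ℕ+, n₁ ∣ n₂ → (A n₂ →* A n₁)) : Subgroup (∀ n, A n) where
  carrier := {x | ∀ (n₁ n₂ : ℕ+) (h : n₁ ∣ n₂), j n₁ n₂ h (x n₂) = x n₁}
  one_mem' := by intro n₁ n₂ h; simp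
  mul_mem' := by
    intro x y hx hy n₁ n₂ h
    simp only [Pi.mul_apply, map_mul, hx n₁ n₂ h, hy n₁ n₂ h]
  inv_mem' := by
    intro x hx n₁ n₂ h
    simp only [Pi.inv_apply, map_inv, hx n₁ n₂ h]

/-- The homomorphism between inverse limits induced by a compatible family of
homomorphisms `r n : G n →* A n`. -/
def limMap (G A : ℕ+ → Type) [∀ n, Group (G n)] [∀ n, Group (A n)]
    (i : ∀ n₁ n₂ : ℕ+, n₁ ∣ n₂ → (G n₂ →* G n₁))
    (j : ∀ n₁ n₂ : ℕ+, n₁ ∣ n₂ → (A n₂ →* A n₁))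
    (r : ∀ n, G n →* A n)
    (hr : ∀ (n₁ n₂ : ℕ+) (h : n₁ ∣ n₂), (r n₁).comp (i n₁ n₂ h) = (j n₁ n₂ h).comp (r n₂)) :
    ↥(dvdLimit G i) →* ↥(dvdLimit A j) where
  toFun x := ⟨fun n => r n ((x : ∀ n, G n) n), by
    intro n₁ n₂ h
    have hx := x.2 n₁ n₂ h
    have hcomp := congrArg (fun f => f ((x : ∀ n, G n) n₂)) (hr n₁ n₂ h)
    simp only [MonoidHom.comp_apply] at hcomp
    rw [← hcomp, hx]⟩
  map_one' := by
    ext n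
    simp
  map_mul' := by
    intro x y
    ext n
    simp

/-!
Put `K n = ker π_{A,n}` and `H = ker χ = r(G)`, so that `g̃ = ∑ g(n) 1_{K n}`. Orthogonality of
the powers of `χ` gives `∑_{t < m} χ^t = m 1_H`, so the right-hand side is
`m ∫_H g̃ = m ∑ g(n) ν(H ∩ K n)`. A left-invariant probability measure gives a measurable subgroup
`S` of finite index the mass `1 / [A : S]`, and `[A : H ∩ K n] = [H : H ∩ K n] [A : H] = #G(n) m`:
`r⁻¹(K n) = ker π_{G,n}` since `r_n` is injective, and `[G : ker π_{G,n}] = #G(n)` since `π_{G,n}`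
is surjective. As `[A : K n] ≥ [H : H ∩ K n] = #G(n)`, the same computation bounds `∫ |g̃|` by
`∑ |g(n)| / #G(n)`.
-/

open Finset

namespace MeasureTheory

variable {α E ι : Type*} [MeasurableSpace α] {μ : Measure α} [NormedAddCommGroup E]
  [CompleteSpace E] [Countable ι]

lemma integrable_tsum_of_summable_integral_norm {F : ι → α → E}
    (hF_int : ∀ i, Integrable (F i) μ) (hF_sum : Summable fun i ↦ ∫ a, ‖F i a‖ ∂μ) :
    Integrable (fun a ↦ ∑' i, F i a) μ := by
  let f : ι → α →₁[μ] E := fun i ↦ (hF_int i).toL1 (F i)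
  have hf : ∑' i, ‖f i‖ₑ ≠ ⊤ := by
    simp only [enorm, ENNReal.tsum_coe_ne_top_iff_summable, ← NNReal.summable_coe, coe_nnnorm,
      f, L1.norm_of_fun_eq_integral_norm]
    exact hF_sum
  refine (L1.integrable_coeFn (∑' i, f i)).congr ?_
  filter_upwards [Lp.hasSum_coeFn_tsum hf, ae_all_iff.2 fun i ↦ (hF_int i).coeFn_toL1]
    with a hsum hcoe
  simp only [f, hcoe] at hsum
  exact hsum.tsum_eq.symm

variable [IsFiniteMeasure μ] {s : ι → Set α} {c : ι → E}

lemma integrable_tsum_indicator (hs : ∀ i, MeasurableSet (s i))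
    (hc : Summable fun i ↦ μ.real (s i) * ‖c i‖) :
    Integrable (fun a ↦ ∑' i, (s i).indicator (fun _ ↦ c i) a) μ := by
  refine integrable_tsum_of_summable_integral_norm
    (fun i ↦ (integrable_const (c i)).indicator (hs i)) ?_
  simpa [norm_indicator_eq_indicator_norm, integral_indicator_const _ (hs _)] using hc

variable [NormedSpace ℝ E] in
lemma integral_tsum_indicator (hs : ∀ i, MeasurableSet (s i))
    (hc : Summable fun i ↦ μ.real (s i) * ‖c i‖) :
    ∫ a, ∑' i, (s i).indicator (fun _ ↦ c i) a ∂μ = ∑' i, μ.real (s i) • c i := by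
  rw [← integral_tsum_of_summable_integral_norm
    (fun i ↦ (integrable_const (c i)).indicator (hs i))]
  · simp [integral_indicator_const _ (hs _)]
  · simpa [norm_indicator_eq_indicator_norm, integral_indicator_const _ (hs _)] using hc

end MeasureTheory

lemma geom_sum_eq_ite_of_pow_eq_one {K : Type*} [Field K] [DecidableEq K] {z : K} {m : ℕ}
    (hz : z ^ m = 1) : ∑ t ∈ range m, z ^ t = if z = 1 then (m : K) else 0 := by
  split_ifs with h
  · simp [h]
  · rw [geom_sum_eq h, hz, sub_self, zero_div]

lemma index_ker_eq_of_range_eq_rootsOfUnity {Γ : Type*} [Group Γ] (χ : Γ →* ℂ) {m : ℕ}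
    [NeZero m] (hpow : ∀ x, χ x ^ m = 1) (hsurj : ∀ z : ℂ, z ^ m = 1 → ∃ x, χ x = z) :
    χ.ker.index = m := by
  have hker : χ.ker = χ.toHomUnits.ker := by
    ext x
    simp
  have hrange : χ.toHomUnits.range = rootsOfUnity m ℂ := by
    ext u
    simp only [MonoidHom.mem_range, mem_rootsOfUnity, Units.ext_iff, Units.val_pow_eq_pow_val,
      MonoidHom.coe_toHomUnits, Units.val_one]
    exact ⟨fun ⟨x, hx⟩ ↦ hx ▸ hpow x, hsurj u⟩
  rw [hker, Subgroup.index_ker, hrange, Complex.card_rootsOfUnity]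

section SubgroupMeasure

variable {Γ : Type*} [Group Γ] [MeasurableSpace Γ] [MeasurableMul Γ] (μ : Measure Γ)
  [IsProbabilityMeasure μ] [μ.IsMulLeftInvariant]

lemma measureReal_subgroup_eq_inv_index (S : Subgroup Γ) [S.FiniteIndex]
    (hS : MeasurableSet (S : Set Γ)) : μ.real S = (S.index : ℝ)⁻¹ := by
  have h := congrArg ENNReal.toReal (S.index_mul_measure hS μ)
  rw [measure_univ, ENNReal.toReal_mul, ENNReal.toReal_natCast] at h
  exact eq_inv_of_mul_eq_one_right h

lemma measureReal_subgroup_le_inv_relIndex (S H : Subgroup Γ) [S.FiniteIndex]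
    (hS : MeasurableSet (S : Set Γ)) : μ.real S ≤ (S.relIndex H : ℝ)⁻¹ := by
  have hrel : 0 < S.relIndex H :=
    Nat.pos_of_ne_zero (mt S.index_eq_zero_of_relIndex_eq_zero Subgroup.FiniteIndex.index_ne_zero)
  rw [measureReal_subgroup_eq_inv_index μ S hS]
  gcongr
  simpa using S.relIndex_le_of_le_right (le_top (a := H))
    (by simpa using Subgroup.FiniteIndex.index_ne_zero)

lemma measureReal_inf_eq_inv_relIndex_mul_index (S H : Subgroup Γ) [S.FiniteIndex]
    [H.FiniteIndex] (hS : MeasurableSet (S : Set Γ)) (hH : MeasurableSet (H : Set Γ)) :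
    μ.real (H ∩ S : Set Γ) = ((S.relIndex H : ℝ) * H.index)⁻¹ := by
  rw [← Subgroup.coe_inf, measureReal_subgroup_eq_inv_index μ _ (hH.inter hS),
    ← Subgroup.relIndex_mul_index inf_le_left, Subgroup.inf_relIndex_left]
  push_cast; rfl

variable {ι : Type*} [Countable ι]

lemma integrable_tsum_indicator_subgroup (H : Subgroup Γ) {K : ι → Subgroup Γ}
    [∀ i, (K i).FiniteIndex] (hK : ∀ i, MeasurableSet (K i : Set Γ)) {g : ι → ℂ}
    (hg : Summable fun i ↦ ‖g i‖ / (K i).relIndex H) :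
    Integrable (fun x ↦ ∑' i, (K i : Set Γ).indicator (fun _ ↦ g i) x) μ := by
  refine integrable_tsum_indicator hK (hg.of_nonneg_of_le (fun i ↦ by positivity) fun i ↦ ?_)
  rw [div_eq_inv_mul]
  gcongr
  exact measureReal_subgroup_le_inv_relIndex μ (K i) H (hK i)

theorem tsum_div_relIndex_ker_eq_sum_integral (χ : Γ →* ℂ) [χ.ker.FiniteIndex]
    (hχ : Measurable χ) (hχpow : ∀ x, χ x ^ χ.ker.index = 1) {K : ι → Subgroup Γ}
    [∀ i, (K i).FiniteIndex] (hK : ∀ i, MeasurableSet (K i : Set Γ)) {g : ι → ℂ}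
    (hg : Summable fun i ↦ ‖g i‖ / (K i).relIndex χ.ker) :
    ∑' i, g i / (K i).relIndex χ.ker =
      ∑ t ∈ range χ.ker.index,
        ∫ x, (∑' i, (K i : Set Γ).indicator (fun _ ↦ g i) x) * χ x ^ t ∂μ := by
  set H := χ.ker
  set m := H.index
  set F := fun x ↦ ∑' i, (K i : Set Γ).indicator (fun _ ↦ g i) x
  have hH : MeasurableSet (H : Set Γ) := hχ (measurableSet_singleton 1)
  have hF : Integrable F μ := integrable_tsum_indicator_subgroup μ H hK hg
  have hFχ (t : ℕ) : Integrable (fun x ↦ F x * χ x ^ t) μ :=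
    hF.mul_bdd (hχ.pow_const t).aestronglyMeasurable (c := 1) <| .of_forall fun x ↦ by
      rw [norm_pow, Complex.norm_eq_one_of_pow_eq_one (hχpow x)
        Subgroup.FiniteIndex.index_ne_zero, one_pow]
  have hgeom (x : Γ) : F x * ∑ t ∈ range m, χ x ^ t = (m : ℂ) • (H : Set Γ).indicator F x := by
    rw [geom_sum_eq_ite_of_pow_eq_one (hχpow x)]
    by_cases hx : x ∈ H
    · simp [hx, (MonoidHom.mem_ker).1 hx, mul_comm]
    · simp [hx, mt (MonoidHom.mem_ker).2 hx]
  have hmeas (i : ι) : (μ.restrict H).real (K i) = ((K i).relIndex H * m : ℝ)⁻¹ := by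
    rw [measureReal_restrict_apply (hK i), Set.inter_comm,
      measureReal_inf_eq_inv_relIndex_mul_index μ (K i) H (hK i) hH]
  have hg' : Summable fun i ↦ (μ.restrict H).real (K i) * ‖g i‖ := by
    simpa [hmeas, mul_inv, div_eq_mul_inv, mul_comm, mul_left_comm] using hg.mul_left (m : ℝ)⁻¹
  calc ∑' i, g i / (K i).relIndex H
      = (m : ℂ) • ∑' i, (μ.restrict H).real (K i) • g i := by
        have hm : (m : ℂ) ≠ 0 := Nat.cast_ne_zero.2 Subgroup.FiniteIndex.index_ne_zero
        rw [← tsum_const_smul'']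
        refine tsum_congr fun i ↦ ?_
        rw [hmeas, Complex.real_smul, smul_eq_mul]
        push_cast
        field_simp
    _ = (m : ℂ) • ∫ x in H, F x ∂μ := by rw [integral_tsum_indicator hK hg']
    _ = ∫ x, F x * ∑ t ∈ range m, χ x ^ t ∂μ := by
        simp_rw [hgeom, integral_smul, integral_indicator hH]
    _ = _ := by
        simp_rw [mul_sum]
        exact integral_finsetSum _ fun t _ ↦ hFχ t

end SubgroupMeasure

theorem exists_seq_of_surjective {X : ℕ → Type*} {f : ∀ k, X (k + 1) → X k}
    (hf : ∀ k, Function.Surjective (f k)) (a : X 0) :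
    ∃ y : ∀ k, X k, y 0 = a ∧ ∀ k, f k (y (k + 1)) = y k :=
  ⟨fun k ↦ Nat.rec a (fun k yk ↦ Function.surjInv (hf k) yk) k, rfl,
    fun k ↦ Function.surjInv_eq (hf k) _⟩

def dvdLimitProj (A : ℕ+ → Type) [∀ n, Group (A n)]
    (j : ∀ n₁ n₂ : ℕ+, n₁ ∣ n₂ → (A n₂ →* A n₁)) (n : ℕ+) : ↥(dvdLimit A j) →* A n :=
  (Pi.evalMonoidHom A n).comp (dvdLimit A j).subtype

section DvdLimit

variable {A : ℕ+ → Type} [∀ n, Group (A n)] {j : ∀ n₁ n₂ : ℕ+, n₁ ∣ n₂ → (A n₂ →* A n₁)}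

lemma transition_transition_apply
    (hjcomp : ∀ (n₁ n₂ n₃ : ℕ+) (h₁₂ : n₁ ∣ n₂) (h₂₃ : n₂ ∣ n₃),
      (j n₁ n₂ h₁₂).comp (j n₂ n₃ h₂₃) = j n₁ n₃ (h₁₂.trans h₂₃))
    {n₁ n₂ n₃ : ℕ+} (h₁₂ : n₁ ∣ n₂) (h₂₃ : n₂ ∣ n₃) (x : A n₃) :
    j n₁ n₂ h₁₂ (j n₂ n₃ h₂₃ x) = j n₁ n₃ (h₁₂.trans h₂₃) x :=
  DFunLike.congr_fun (hjcomp n₁ n₂ n₃ h₁₂ h₂₃) x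

lemma transition_chain_of_le (hjid : ∀ n, j n n dvd_rfl = MonoidHom.id _)
    (hjcomp : ∀ (n₁ n₂ n₃ : ℕ+) (h₁₂ : n₁ ∣ n₂) (h₂₃ : n₂ ∣ n₃),
      (j n₁ n₂ h₁₂).comp (j n₂ n₃ h₂₃) = j n₁ n₃ (h₁₂.trans h₂₃))
    {c : ℕ → ℕ+} (hc : ∀ k l, k ≤ l → c k ∣ c l) {y : ∀ k, A (c k)}
    (hy : ∀ k, j (c k) (c (k + 1)) (hc k (k + 1) k.le_succ) (y (k + 1)) = y k)
    {k l : ℕ} (hkl : k ≤ l) : j (c k) (c l) (hc k l hkl) (y l) = y k := by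
  induction l, hkl using Nat.le_induction with
  | base => rw [hjid]; rfl
  | succ l hkl ih =>
    rw [← transition_transition_apply hjcomp (hc k l hkl) (hc l (l + 1) l.le_succ), hy, ih]

lemma dvdLimitProj_surjective (hjid : ∀ n, j n n dvd_rfl = MonoidHom.id _)
    (hjcomp : ∀ (n₁ n₂ n₃ : ℕ+) (h₁₂ : n₁ ∣ n₂) (h₂₃ : n₂ ∣ n₃),
      (j n₁ n₂ h₁₂).comp (j n₂ n₃ h₂₃) = j n₁ n₃ (h₁₂.trans h₂₃))
    (hjsurj : ∀ (n₁ n₂ : ℕ+) (h : n₁ ∣ n₂), Function.Surjective (j n₁ n₂ h)) (n : ℕ+) :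
    Function.Surjective (dvdLimitProj A j n) := by
  intro a
  -- `k ↦ n * k!` is a chain in `(ℕ+, ∣)` starting at `n` and cofinal in it.
  let c : ℕ → ℕ+ := fun k ↦ n * ⟨k.factorial, k.factorial_pos⟩
  have hc (k l : ℕ) (hkl : k ≤ l) : c k ∣ c l :=
    (PNat.dvd_iff ..).2 (Nat.mul_dvd_mul_left _ (Nat.factorial_dvd_factorial hkl))
  have hnc (k : ℕ) : n ∣ c k := dvd_mul_right n _
  have hcofinal (m : ℕ+) : m ∣ c m :=
    (PNat.dvd_iff ..).2 (Dvd.dvd.mul_left (Nat.dvd_factorial m.pos le_rfl) _)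
  obtain ⟨a₀, ha₀⟩ := hjsurj n (c 0) (hnc 0) a
  obtain ⟨y, hy₀, hy⟩ := exists_seq_of_surjective (X := fun k ↦ A (c k))
    (fun k ↦ hjsurj (c k) (c (k + 1)) (hc k (k + 1) k.le_succ)) a₀
  have hy_le {k l : ℕ} (hkl : k ≤ l) := transition_chain_of_le hjid hjcomp hc hy hkl
  have hcompat (m : ℕ+) (k : ℕ) (h : m ∣ c k) :
      j m (c m) (hcofinal m) (y m) = j m (c k) h (y k) := by
    rw [← hy_le (le_max_left (m : ℕ) k), ← hy_le (le_max_right (m : ℕ) k),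
      transition_transition_apply hjcomp, transition_transition_apply hjcomp]
  refine ⟨⟨fun m ↦ j m (c m) (hcofinal m) (y m), fun m₁ m₂ h ↦ ?_⟩, ?_⟩
  · rw [transition_transition_apply hjcomp, ← hcompat]
  · change j n (c n) (hcofinal n) (y n) = a
    rw [hcompat n 0 (hnc 0), hy₀, ha₀]

end DvdLimit

section LimMap

variable {G A : ℕ+ → Type} [∀ n, Group (G n)] [∀ n, Group (A n)]
  {i : ∀ n₁ n₂ : ℕ+, n₁ ∣ n₂ → (G n₂ →* G n₁)} {j : ∀ n₁ n₂ : ℕ+, n₁ ∣ n₂ → (A n₂ →* A n₁)}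
  {r : ∀ n, G n →* A n}

lemma relIndex_ker_dvdLimitProj_range_limMap
    (hr : ∀ (n₁ n₂ : ℕ+) (h : n₁ ∣ n₂), (r n₁).comp (i n₁ n₂ h) = (j n₁ n₂ h).comp (r n₂))
    {n : ℕ+} (hrinj : Function.Injective (r n)) (hsurj : Function.Surjective (dvdLimitProj G i n)) :
    (dvdLimitProj A j n).ker.relIndex (limMap G A i j r hr).range = Nat.card (G n) := by
  rw [← Subgroup.index_comap, MonoidHom.comap_ker,
    show (dvdLimitProj A j n).comp (limMap G A i j r hr) = (r n).comp (dvdLimitProj G i n) from rfl,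
    MonoidHom.ker_comp_of_injective _ _ hrinj, Subgroup.index_ker,
    MonoidHom.range_eq_top.2 hsurj, Subgroup.card_top]

end LimMap

theorem profinite_character_sum_formula_general
    (G A : ℕ+ → Type) [∀ n, Group (G n)] [∀ n, Group (A n)]
    [∀ n, Fintype (A n)] [∀ n, DecidableEq (A n)]
    [∀ n, TopologicalSpace (A n)] [∀ n, DiscreteTopology (A n)]
    [∀ n, MeasurableSpace (A n)] [∀ n, BorelSpace (A n)]
    (i : ∀ n₁ n₂ : ℕ+, n₁ ∣ n₂ → (G n₂ →* G n₁))
    (j : ∀ n₁ n₂ : ℕ+, n₁ ∣ n₂ → (A n₂ →* A n₁))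
    -- inverse system axioms
    (hiid : ∀ n, i n n dvd_rfl = MonoidHom.id _)
    (hicomp : ∀ (n₁ n₂ n₃ : ℕ+) (h₁₂ : n₁ ∣ n₂) (h₂₃ : n₂ ∣ n₃),
      (i n₁ n₂ h₁₂).comp (i n₂ n₃ h₂₃) = i n₁ n₃ (h₁₂.trans h₂₃))
    (hisurj : ∀ (n₁ n₂ : ℕ+) (h : n₁ ∣ n₂), Function.Surjective (i n₁ n₂ h))
    -- compatible injections r_n
    (r : ∀ n, G n →* A n) (hrinj : ∀ n, Function.Injective (r n))
    (hr : ∀ (n₁ n₂ : ℕ+) (h : n₁ ∣ n₂), (r n₁).comp (i n₁ n₂ h) = (j n₁ n₂ h).comp (r n₂))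
    -- the exact sequence 1 → G → A → μ_m → 1
    (m : ℕ) (hm : 1 ≤ m)
    (χ : ↥(dvdLimit A j) →* ℂ) (hχcont : Continuous χ)
    (hχroot : ∀ x, χ x ^ m = 1)
    (hχsurj : ∀ z : ℂ, z ^ m = 1 → ∃ x, χ x = z)
    (hχker : ∀ x, χ x = 1 ↔ x ∈ (limMap G A i j r hr).range)
    -- the normalized Haar measure on A
    (νA : Measure ↥(dvdLimit A j)) [νA.IsHaarMeasure] [IsProbabilityMeasure νA]
    -- the arithmetic function g
    (g : ℕ+ → ℂ)
    (hsum : Summable fun n : ℕ+ => ‖g n‖ / (Nat.card (G n) : ℝ)) :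
    Integrable
        (fun x : ↥(dvdLimit A j) =>
          ∑' n : ℕ+, if (x : ∀ n', A n') n = 1 then g n else 0) νA ∧
    ∑' n : ℕ+, g n / (Nat.card (G n) : ℂ) =
      ∑ t ∈ Finset.range m,
        ∫ x, (∑' n : ℕ+, if (x : ∀ n', A n') n = 1 then g n else 0) * χ x ^ t ∂νA := by
  set K : ℕ+ → Subgroup (dvdLimit A j) := fun n ↦ (dvdLimitProj A j n).ker
  have : NeZero m := ⟨by omega⟩
  have hindex : χ.ker.index = m := index_ker_eq_of_range_eq_rootsOfUnity χ hχroot hχsurj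
  have : χ.ker.FiniteIndex := ⟨by omega⟩
  have hrel (n : ℕ+) : (K n).relIndex χ.ker = Nat.card (G n) := by
    rw [show χ.ker = (limMap G A i j r hr).range from SetLike.ext hχker]
    exact relIndex_ker_dvdLimitProj_range_limMap hr (hrinj n)
      (dvdLimitProj_surjective hiid hicomp hisurj n)
  have hK (n : ℕ+) : MeasurableSet (K n : Set (dvdLimit A j)) :=
    (measurable_pi_apply n).comp measurable_subtype_coe (measurableSet_singleton 1)
  have hg : Summable fun n ↦ ‖g n‖ / (K n).relIndex χ.ker := by simpa only [hrel] using hsum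
  have hF (x : dvdLimit A j) : (∑' n, if (x : ∀ n', A n') n = 1 then g n else 0) =
      ∑' n, (K n : Set (dvdLimit A j)).indicator (fun _ ↦ g n) x := by
    classical
    refine tsum_congr fun n ↦ ?_
    simp only [Set.indicator_apply, SetLike.mem_coe]
    exact if_congr Iff.rfl rfl rfl
  simp only [hF]
  refine ⟨integrable_tsum_indicator_subgroup νA χ.ker hK hg, ?_⟩
  simpa only [hrel, hindex] using tsum_div_relIndex_ker_eq_sum_integral νA χ hχcont.measurable
    (hindex ▸ hχroot) hK hg

/-- **Theorem 1.4**: for surjective inverse systems `(G(n))`, `(A(n))` of finite groups over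
`(ℕ≥1, ∣)` with compatible injections `r_n : G(n) → A(n)`, an exact sequence
`1 → G → A → μ_m → 1` of profinite groups with `χ` continuous, and `g` with
`∑ |g(n)|/#G(n) < ∞`, the function `g̃ = ∑_n g(n)·1_{ker π_{A,n}}` is `ν_A`-integrable and
`∑_{n≥1} g(n)/#G(n) = ∑_{i=0}^{m−1} ∫_A g̃·χ^i dν_A`. -/
theorem profinite_character_sum_formula
    (G A : ℕ+ → Type) [∀ n, Group (G n)] [∀ n, Group (A n)]
    [∀ n, Fintype (G n)] [∀ n, Fintype (A n)] [∀ n, DecidableEq (A n)]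
    [∀ n, TopologicalSpace (A n)] [∀ n, DiscreteTopology (A n)]
    [∀ n, MeasurableSpace (A n)] [∀ n, BorelSpace (A n)]
    (i : ∀ n₁ n₂ : ℕ+, n₁ ∣ n₂ → (G n₂ →* G n₁))
    (j : ∀ n₁ n₂ : ℕ+, n₁ ∣ n₂ → (A n₂ →* A n₁))
    -- inverse system axioms
    (hiid : ∀ n, i n n dvd_rfl = MonoidHom.id _)
    (hjid : ∀ n, j n n dvd_rfl = MonoidHom.id _)
    (hicomp : ∀ (n₁ n₂ n₃ : ℕ+) (h₁₂ : n₁ ∣ n₂) (h₂₃ : n₂ ∣ n₃),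
      (i n₁ n₂ h₁₂).comp (i n₂ n₃ h₂₃) = i n₁ n₃ (h₁₂.trans h₂₃))
    (hjcomp : ∀ (n₁ n₂ n₃ : ℕ+) (h₁₂ : n₁ ∣ n₂) (h₂₃ : n₂ ∣ n₃),
      (j n₁ n₂ h₁₂).comp (j n₂ n₃ h₂₃) = j n₁ n₃ (h₁₂.trans h₂₃))
    (hisurj : ∀ (n₁ n₂ : ℕ+) (h : n₁ ∣ n₂), Function.Surjective (i n₁ n₂ h))
    (hjsurj : ∀ (n₁ n₂ : ℕ+) (h : n₁ ∣ n₂), Function.Surjective (j n₁ n₂ h))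
    -- compatible injections r_n
    (r : ∀ n, G n →* A n) (hrinj : ∀ n, Function.Injective (r n))
    (hr : ∀ (n₁ n₂ : ℕ+) (h : n₁ ∣ n₂), (r n₁).comp (i n₁ n₂ h) = (j n₁ n₂ h).comp (r n₂))
    -- the exact sequence 1 → G → A → μ_m → 1
    (m : ℕ) (hm : 1 ≤ m)
    (χ : ↥(dvdLimit A j) →* ℂ) (hχcont : Continuous χ)
    (hχroot : ∀ x, χ x ^ m = 1)
    (hχsurj : ∀ z : ℂ, z ^ m = 1 → ∃ x, χ x = z)
    (hχker : ∀ x, χ x = 1 ↔ x ∈ (limMap G A i j r hr).range)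
    -- the normalized Haar measure on A
    (νA : Measure ↥(dvdLimit A j)) [νA.IsHaarMeasure] [IsProbabilityMeasure νA]
    -- the arithmetic function g
    (g : ℕ+ → ℂ)
    (hsum : Summable fun n : ℕ+ => ‖g n‖ / (Nat.card (G n) : ℝ)) :
    Integrable
        (fun x : ↥(dvdLimit A j) =>
          ∑' n : ℕ+, if (x : ∀ n', A n') n = 1 then g n else 0) νA ∧
    ∑' n : ℕ+, g n / (Nat.card (G n) : ℂ) =
      ∑ t ∈ Finset.range m,
        ∫ x, (∑' n : ℕ+, if (x : ∀ n', A n') n = 1 then g n else 0) * χ x ^ t ∂νA :=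
  profinite_character_sum_formula_general G A i j hiid hicomp hisurj r hrinj hr m hm χ hχcont hχroot
    hχsurj hχker νA g hsum
end

section
/- Suppose p is an odd prime, or p = 2 and (e is odd or a > 0). Then for every k ≥ 1 the group A(p^k) is isomorphic to the group of matrices { (1 0; b d) : b ∈ ℤ/p^kℤ, d ∈ (ℤ/p^kℤ)^×, b + 1 ≡ d (mod p^{min(k, ν_p(e))}) } under matrix multiplication. -/
noncomputable section

abbrev Qbar : Type := AlgebraicClosure ℚ

/-- `a` as a unit of `Q̄`. -/
def aUnit (a : ℤ) (ha : a ≠ 0) : Qbarˣ :=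
  Units.mk0 (a : Qbar) (by exact_mod_cast ha)

/-- `R_n = {α ∈ Q̄^× : α^n ∈ ⟨a⟩}`, the group of `n`-radicals of `a`. -/
def radical (a : ℤ) (ha : a ≠ 0) (n : ℕ) : Subgroup Qbarˣ :=
  Subgroup.comap (powMonoidHom n) (Subgroup.zpowers (aUnit a ha))

/-- `A(n)`: the group of automorphisms of `R_n` fixing every element of `ℚ^× ∩ R_n`. -/
def autGroup (a : ℤ) (ha : a ≠ 0) (n : ℕ) : Subgroup (MulAut ↥(radical a ha n)) where
  carrier := {f | ∀ x : ↥(radical a ha n),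
    ((x : Qbarˣ) : Qbar) ∈ Set.range (algebraMap ℚ Qbar) → f x = x}
  one_mem' := by intro x _; rfl
  mul_mem' := by
    intro f g hf hg x hx
    have h1 : g x = x := hg x hx
    have h2 : f x = x := hf x hx
    show f (g x) = x
    rw [h1, h2]
  inv_mem' := by
    intro f hf x hx
    have h2 : f x = x := hf x hx
    calc f⁻¹ x = f⁻¹ (f x) := by rw [h2]
    _ = x := by simp

/-- The group of matrices `(1 0; b d)` with `b ∈ ℤ/Nℤ`, `d ∈ (ℤ/Nℤ)^×` and
`t·b + 1 ≡ d (mod m)`, under matrix multiplication. -/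
def matGroup (N m t : ℕ) (h : m ∣ N) : Submonoid (Matrix (Fin 2) (Fin 2) (ZMod N)) where
  carrier := {A | A 0 0 = 1 ∧ A 0 1 = 0 ∧ IsUnit (A 1 1) ∧
    ZMod.castHom h (ZMod m) ((t : ZMod N) * A 1 0 + 1) =
      ZMod.castHom h (ZMod m) (A 1 1)}
  one_mem' := ⟨by simp, by simp, by simp, by simp⟩
  mul_mem' := by
    rintro A B ⟨hA00, hA01, hA11, hAc⟩ ⟨hB00, hB01, hB11, hBc⟩
    refine ⟨?_, ?_, ?_, ?_⟩
    · simp [Matrix.mul_apply, Fin.sum_univ_two, hA00, hA01, hB00]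
    · simp [Matrix.mul_apply, Fin.sum_univ_two, hA00, hA01, hB01]
    · simpa [Matrix.mul_apply, Fin.sum_univ_two, hB01] using hA11.mul hB11
    · simp only [Matrix.mul_apply, Fin.sum_univ_two, hB00, hB01, map_add, map_mul,
        map_one, map_natCast, mul_one, mul_zero, zero_add, add_zero] at hAc hBc ⊢
      rw [← hAc, ← hBc]
      ring

/-!
Let `N = p ^ k`, `M = gcd(N, e) = p ^ min(k, ν_p(e))` and `q = N / M`. The hypothesis on `p`
makes `M` odd or `a` positive, so `a = r ^ M` for an integer `r`. Maximality of `e` forces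
every rational `y` with `y ^ N ∈ ⟨a⟩` to be `± r ^ s`, and every automorphism of `R_N` fixes
`-1`, so `A(N)` is the stabiliser of `r` in `Aut(R_N)`.

Choose a primitive `N`-th root of unity `ζ` and `γ` with `γ ^ q = r`, and put `α = ζ γ`. Then
`(c, m) ↦ ζ ^ c α ^ m` is an isomorphism `ℤ/N × ℤ ≅ R_N` sending `(-q, q)` to `r` (with `γ`
in place of `α` the condition below would read `b ≡ 0` instead of `b + 1 ≡ d`). An
automorphism of `ℤ/N × ℤ` is `(c, m) ↦ (d c + b m, s m)` with `d` a unit and `s = ±1`; it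
fixes `(-q, q)` iff `s = 1` and `q (b + 1 - d) = 0`, i.e. `b + 1 ≡ d (mod M)`.
-/

open Multiplicative MulAction

section Arithmetic

theorem Nat.Prime.gcd_pow_eq_pow_min {p : ℕ} (hp : p.Prime) (k : ℕ) {e : ℕ} (he : e ≠ 0) :
    Nat.gcd (p ^ k) e = p ^ min k (padicValNat p e) := by
  have : Fact p.Prime := ⟨hp⟩
  obtain ⟨i, hik, hi⟩ := (Nat.dvd_prime_pow hp).mp (Nat.gcd_dvd_left (p ^ k) e)
  have hie : i ≤ padicValNat p e := (padicValNat_dvd_iff_le he).mp (hi ▸ Nat.gcd_dvd_right _ e)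
  refine Nat.dvd_antisymm (hi ▸ Nat.pow_dvd_pow p (le_min hik hie)) (Nat.dvd_gcd ?_ ?_)
  · exact Nat.pow_dvd_pow p (min_le_left _ _)
  · exact (Nat.pow_dvd_pow p (min_le_right _ _)).trans pow_padicValNat_dvd

theorem Int.exists_pow_eq_of_dvd {a : ℤ} {e M : ℕ} (he : ∃ b : ℕ, |a| = (b : ℤ) ^ e)
    (hM : M ∣ e) (hodd : Odd M ∨ 0 < a) : ∃ r : ℤ, r ^ M = a := by
  obtain ⟨b, hb⟩ := he
  have hsign : a.sign ^ M = a.sign := by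
    rcases hodd with hM | ha
    · rcases Int.sign_trichotomy a with h | h | h <;> simp [h, hM.neg_one_pow, hM.pos.ne']
    · simp [Int.sign_eq_one_of_pos ha]
  refine ⟨a.sign * (b : ℤ) ^ (e / M), ?_⟩
  rw [mul_pow, ← pow_mul, Nat.div_mul_cancel hM, ← hb, hsign, Int.sign_mul_abs]

variable {a : ℤ} {e N : ℕ}

/-- Maximality of `e` says that the base `b` of `|a| = b ^ e` is not a proper power. -/
theorem dvd_mul_of_pow_eq_pow (he : IsGreatest {m : ℕ | 0 < m ∧ ∃ b : ℕ, |a| = (b : ℤ) ^ m} e)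
    (hN : 0 < N) {z : ℤ} {m : ℕ} (h : z ^ N = a ^ m) : N ∣ e * m := by
  obtain ⟨n, hn⟩ := he.1.2
  have habs : z.natAbs ^ N = n ^ (e * m) := by
    have : |z| ^ N = |a| ^ m := by rw [← abs_pow, h, abs_pow]
    rw [hn, ← pow_mul, ← Int.natCast_natAbs] at this
    exact_mod_cast this
  obtain ⟨c, -, hc⟩ := Nat.exists_eq_pow_of_pow_eq_pow (Or.inl hN.ne') habs
  have hg : 0 < N / N.gcd (e * m) :=
    Nat.div_pos (Nat.gcd_le_left _ hN) (Nat.gcd_pos_of_pos_left _ hN)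
  have hle : N / N.gcd (e * m) * e ≤ e :=
    he.2 ⟨Nat.mul_pos hg he.1.1, c, by rw [hn, hc, pow_mul]; push_cast; rfl⟩
  have hone : N / N.gcd (e * m) = 1 := by
    have := he.1.1
    nlinarith
  rw [← Nat.eq_of_dvd_of_div_eq_one (Nat.gcd_dvd_left N (e * m)) hone]
  exact Nat.gcd_dvd_right N (e * m)

theorem Rat.exists_intCast_eq_of_pow_eq_intCast {y : ℚ} (hN : N ≠ 0) {b : ℤ}
    (h : y ^ N = b) : ∃ z : ℤ, y = z := by
  have hden : y.den ^ N = 1 := by rw [← Rat.den_pow, h, Rat.den_intCast]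
  exact ⟨y.num, (Rat.coe_int_num_of_den_eq_one ((pow_eq_one_iff.mp hden).resolve_right hN)).symm⟩

theorem exists_pow_eq_or_neg_of_pow_eq_pow {r : ℤ}
    (he : IsGreatest {m : ℕ | 0 < m ∧ ∃ b : ℕ, |a| = (b : ℤ) ^ m} e) (hN : 0 < N)
    (hr : r ^ N.gcd e = a) {y : ℚ} {m : ℕ} (hy : y ^ N = (a : ℚ) ^ m) :
    ∃ s : ℕ, y = (r : ℚ) ^ s ∨ y = -(r : ℚ) ^ s := by
  obtain ⟨z, rfl⟩ :=
    Rat.exists_intCast_eq_of_pow_eq_intCast hN.ne' (b := a ^ m) (by simpa using hy)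
  have hdvd : N ∣ e * m := dvd_mul_of_pow_eq_pow he hN (by exact_mod_cast hy)
  set M := N.gcd e
  have hM : 0 < M := Nat.gcd_pos_of_pos_left e hN
  have hcop : (N / M).Coprime (e / M) := Nat.coprime_div_gcd_div_gcd hM
  obtain ⟨s, hs⟩ : N / M ∣ m := by
    refine hcop.dvd_of_dvd_mul_left ((Nat.mul_dvd_mul_iff_left hM).mp ?_)
    rwa [Nat.mul_div_cancel' (Nat.gcd_dvd_left N e), ← mul_assoc,
      Nat.mul_div_cancel' (Nat.gcd_dvd_right N e)]
  refine ⟨s, abs_eq_abs.mp ((pow_left_inj₀ (abs_nonneg _) (abs_nonneg _) hN.ne').mp ?_)⟩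
  rw [← abs_pow, ← abs_pow, hy, ← hr, hs]
  push_cast
  rw [← pow_mul, ← pow_mul, ← mul_assoc, Nat.mul_div_cancel' (Nat.gcd_dvd_left N e), mul_comm]

theorem exists_zpow_eq_or_neg_of_pow_eq_zpow {r : ℤ}
    (he : IsGreatest {m : ℕ | 0 < m ∧ ∃ b : ℕ, |a| = (b : ℤ) ^ m} e) (hN : 0 < N)
    (hr : r ^ N.gcd e = a) {y : ℚ} {m : ℤ} (hy : y ^ N = (a : ℚ) ^ m) :
    ∃ s : ℤ, y = (r : ℚ) ^ s ∨ y = -(r : ℚ) ^ s := by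
  obtain ⟨n, rfl | rfl⟩ := m.eq_nat_or_neg
  · obtain ⟨s, hs⟩ := exists_pow_eq_or_neg_of_pow_eq_pow he hN hr (by simpa using hy)
    exact ⟨s, by simpa using hs⟩
  · obtain ⟨s, hs⟩ := exists_pow_eq_or_neg_of_pow_eq_pow he hN hr (y := y⁻¹) (m := n)
      (by rw [inv_pow, hy, zpow_neg, inv_inv, zpow_natCast])
    refine ⟨-s, ?_⟩
    rw [zpow_neg, zpow_natCast, ← inv_neg]
    simpa only [inv_eq_iff_eq_inv] using hs

end Arithmetic

section Coordinates

variable {G : Type*} [CommGroup G] {N : ℕ} {A ζ α : G}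

def coordHom (hζ : ζ ^ N = 1) (α : G) : Multiplicative (ZMod N × ℤ) →* G :=
  AddMonoidHom.toMultiplicativeLeft <|
    (ZMod.lift N ⟨zmultiplesHom _ (Additive.ofMul ζ), by simp [← ofMul_pow, hζ]⟩).coprod
      (zmultiplesHom _ (Additive.ofMul α))

theorem coordHom_apply_intCast (hζ : ζ ^ N = 1) (i m : ℤ) :
    coordHom hζ α (ofAdd ((i : ZMod N), m)) = ζ ^ i * α ^ m := by
  simp [coordHom]

theorem exists_eq_ofAdd_intCast (v : Multiplicative (ZMod N × ℤ)) :
    ∃ i m : ℤ, v = ofAdd ((i : ZMod N), m) := by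
  obtain ⟨i, hi⟩ := ZMod.intCast_surjective (toAdd v).1
  exact ⟨i, (toAdd v).2, by rw [hi]; rfl⟩

theorem coordHom_pow (hζ : ζ ^ N = 1) (v : Multiplicative (ZMod N × ℤ)) :
    coordHom hζ α v ^ N = (α ^ N) ^ (toAdd v).2 := by
  obtain ⟨i, m, rfl⟩ := exists_eq_ofAdd_intCast v
  rw [coordHom_apply_intCast, mul_pow, ← zpow_natCast, ← zpow_natCast, ← zpow_mul, ← zpow_mul,
    mul_comm i, mul_comm m, zpow_mul, zpow_mul, zpow_natCast, zpow_natCast, hζ, one_zpow, one_mul]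
  rfl

theorem coordHom_injective (hζ : IsPrimitiveRoot ζ N) (hα : α ^ N = A) (hA : ¬IsOfFinOrder A) :
    Function.Injective (coordHom hζ.pow_eq_one α) := by
  refine (injective_iff_map_eq_one _).mpr fun v hv => ?_
  have hm : (toAdd v).2 = 0 := by
    by_contra hm
    refine hA (isOfFinOrder_iff_zpow_eq_one.mpr ⟨_, hm, ?_⟩)
    rw [← hα, ← coordHom_pow hζ.pow_eq_one, hv, one_pow]
  obtain ⟨i, m, rfl⟩ := exists_eq_ofAdd_intCast v
  obtain rfl : m = 0 := hm
  rw [coordHom_apply_intCast, zpow_zero, mul_one, hζ.zpow_eq_one_iff_dvd,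
    ← ZMod.intCast_zmod_eq_zero_iff_dvd] at hv
  rw [hv]
  rfl

end Coordinates

section RadicalCoordinates

variable {K : Type*} [CommRing K] [IsDomain K] {N : ℕ} [NeZero N] {A ζ α : Kˣ}

theorem coordHom_range (hζ : IsPrimitiveRoot ζ N) (hα : α ^ N = A) :
    (coordHom hζ.pow_eq_one α).range = (Subgroup.zpowers A).comap (powMonoidHom N) := by
  ext x
  rw [MonoidHom.mem_range, Subgroup.mem_comap, powMonoidHom_apply, Subgroup.mem_zpowers_iff]
  constructor
  · rintro ⟨v, rfl⟩
    exact ⟨(toAdd v).2, by rw [coordHom_pow, hα]⟩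
  · rintro ⟨m, hm⟩
    have hroot : x * α ^ (-m) ∈ rootsOfUnity N K := by
      rw [mem_rootsOfUnity, mul_pow, ← hm, ← zpow_natCast (α ^ (-m)), ← zpow_mul, mul_comm (-m),
        zpow_mul, zpow_natCast, hα, ← zpow_add, add_neg_cancel, zpow_zero]
    rw [← hζ.zpowers_eq] at hroot
    obtain ⟨i, hi⟩ := Subgroup.mem_zpowers_iff.mp hroot
    refine ⟨ofAdd ((i : ZMod N), m), ?_⟩
    rw [coordHom_apply_intCast, hi, mul_assoc, ← zpow_add, neg_add_cancel, zpow_zero, mul_one]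

def coordEquiv (hζ : IsPrimitiveRoot ζ N) (hα : α ^ N = A) (hA : ¬IsOfFinOrder A) :
    Multiplicative (ZMod N × ℤ) ≃* (Subgroup.zpowers A).comap (powMonoidHom N) :=
  (MonoidHom.ofInjective (coordHom_injective hζ hα hA)).trans
    (MulEquiv.subgroupCongr (coordHom_range hζ hα))

theorem coordEquiv_apply (hζ : IsPrimitiveRoot ζ N) (hα : α ^ N = A) (hA : ¬IsOfFinOrder A)
    (v : Multiplicative (ZMod N × ℤ)) :
    (coordEquiv hζ hα hA v : Kˣ) = coordHom hζ.pow_eq_one α v :=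
  rfl

end RadicalCoordinates

section MatGroup

variable {N M t : ℕ} {h : M ∣ N}

theorem matGroup_mul_apply_one_zero (A B : matGroup N M t h) :
    (A * B : matGroup N M t h).1 1 0 = A.1 1 0 + A.1 1 1 * B.1 1 0 := by
  simp [Matrix.mul_apply, Fin.sum_univ_two, B.2.1]

theorem matGroup_mul_apply_one_one (A B : matGroup N M t h) :
    (A * B : matGroup N M t h).1 1 1 = A.1 1 1 * B.1 1 1 := by
  simp [Matrix.mul_apply, Fin.sum_univ_two, B.2.2.1]

theorem matGroup_ext {A B : matGroup N M t h} (h₁₀ : A.1 1 0 = B.1 1 0)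
    (h₁₁ : A.1 1 1 = B.1 1 1) : A = B := by
  apply Subtype.ext
  ext i j
  fin_cases i <;> fin_cases j
  · exact A.2.1.trans B.2.1.symm
  · exact A.2.2.1.trans B.2.2.1.symm
  · exact h₁₀
  · exact h₁₁

theorem ZMod.castHom_eq_zero_iff_mul_eq_zero {q : ℕ} (hMq : M * q = N) (hq : q ≠ 0)
    (x : ZMod N) : ZMod.castHom (Dvd.intro q hMq) (ZMod M) x = 0 ↔ (q : ZMod N) * x = 0 := by
  subst hMq
  obtain ⟨x, rfl⟩ := ZMod.intCast_surjective x
  rw [map_intCast, ZMod.intCast_zmod_eq_zero_iff_dvd, ← Int.cast_natCast q, ← Int.cast_mul,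
    ZMod.intCast_zmod_eq_zero_iff_dvd, Nat.cast_mul, mul_comm (q : ℤ),
    mul_dvd_mul_iff_right (by exact_mod_cast hq)]

/-- The matrix `(1 0; b d)` acting on the column vector `(m, c)`. -/
def shear (b : ZMod N) (d : (ZMod N)ˣ) : ZMod N × ℤ ≃+ ZMod N × ℤ where
  toFun v := (d * v.1 + b * v.2, v.2)
  invFun v := (↑d⁻¹ * (v.1 - b * v.2), v.2)
  left_inv v := by ext <;> simp
  right_inv v := by ext <;> simp
  map_add' v w := by ext <;> simp [mul_add, add_add_add_comm]

def matGroupToMulAut : matGroup N M t h →* MulAut (Multiplicative (ZMod N × ℤ)) where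
  toFun A := AddEquiv.toMultiplicative (shear (A.1 1 0) A.2.2.2.1.unit)
  map_one' := by ext v <;> simp [shear]
  map_mul' A B := by
    ext v <;> simp [shear, matGroup_mul_apply_one_zero, matGroup_mul_apply_one_one]
    ring

theorem matGroupToMulAut_apply (A : matGroup N M t h) (v : ZMod N × ℤ) :
    matGroupToMulAut A (ofAdd v) = ofAdd (A.1 1 1 * v.1 + A.1 1 0 * v.2, v.2) :=
  rfl

theorem matGroupToMulAut_injective : Function.Injective (matGroupToMulAut (h := h) (t := t)) := by
  intro A B hAB
  have h₁ := congrArg toAdd (DFunLike.congr_fun hAB (ofAdd (1, 0)))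
  have h₂ := congrArg toAdd (DFunLike.congr_fun hAB (ofAdd (0, 1)))
  simp only [matGroupToMulAut_apply, toAdd_ofAdd, Prod.mk.injEq] at h₁ h₂
  exact matGroup_ext (by simpa using h₂.1) (by simpa using h₁.1)

end MatGroup

theorem AddMonoidHom.zmod_prod_int_apply {N : ℕ} [NeZero N] (f : ZMod N × ℤ →+ ZMod N × ℤ)
    (v : ZMod N × ℤ) :
    f v = (v.1 * (f (1, 0)).1 + v.2 * (f (0, 1)).1, v.2 * (f (0, 1)).2) := by
  have torsion : (f (1, 0)).2 = 0 := by
    have h : N • f (1, 0) = 0 := by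
      rw [← map_nsmul, show N • ((1 : ZMod N), (0 : ℤ)) = 0 by ext <;> simp, map_zero]
    simpa [NeZero.ne N] using congrArg Prod.snd h
  have decomp : v = v.1.val • ((1 : ZMod N), (0 : ℤ)) + v.2 • ((0 : ZMod N), (1 : ℤ)) := by
    ext <;> simp
  conv_lhs => rw [decomp, map_add, map_nsmul, map_zsmul]
  ext <;> simp [torsion, mul_comm]

section Stabilizer

variable {N M q : ℕ} [NeZero N]

theorem matGroupToMulAut_mem_stabilizer (hMq : M * q = N) (A : matGroup N M 1 (Dvd.intro q hMq)) :
    matGroupToMulAut A ∈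
      stabilizer (MulAut (Multiplicative (ZMod N × ℤ))) (ofAdd (-(q : ZMod N), (q : ℤ))) := by
  obtain ⟨-, -, -, hcong⟩ := A.2
  have key : (q : ZMod N) * (A.1 1 0 + 1 - A.1 1 1) = 0 := by
    rw [← ZMod.castHom_eq_zero_iff_mul_eq_zero hMq (right_ne_zero_of_mul (hMq ▸ NeZero.ne N)),
      map_sub, ← hcong, Nat.cast_one, one_mul, sub_self]
  rw [mem_stabilizer_iff, MulAut.smul_def, matGroupToMulAut_apply]
  congr 1
  ext
  · simp only [Int.cast_natCast]
    linear_combination key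
  · rfl

theorem exists_matGroupToMulAut_eq (hMq : M * q = N) {σ : MulAut (Multiplicative (ZMod N × ℤ))}
    (hσ : σ ∈ stabilizer (MulAut (Multiplicative (ZMod N × ℤ))) (ofAdd (-(q : ZMod N), (q : ℤ)))) :
    ∃ A : matGroup N M 1 (Dvd.intro q hMq), matGroupToMulAut A = σ := by
  have hq : q ≠ 0 := right_ne_zero_of_mul (hMq ▸ NeZero.ne N)
  set τ := AddEquiv.toMultiplicative.symm σ
  have formula := τ.toAddMonoidHom.zmod_prod_int_apply
  simp only [AddEquiv.coe_toAddMonoidHom] at formula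
  set d := (τ (1, 0)).1
  set b := (τ (0, 1)).1
  have hfix : τ (-(q : ZMod N), (q : ℤ)) = (-(q : ZMod N), (q : ℤ)) := congrArg toAdd hσ
  rw [formula, Prod.mk.injEq] at hfix
  have hs : (τ (0, 1)).2 = 1 :=
    mul_left_cancel₀ (show (q : ℤ) ≠ 0 by exact_mod_cast hq) (hfix.2.trans (mul_one _).symm)
  have hd : IsUnit d := by
    obtain ⟨v, hv⟩ := τ.surjective (1, 0)
    rw [formula, hs, mul_one, Prod.mk.injEq] at hv
    rw [hv.2, Int.cast_zero, zero_mul, add_zero] at hv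
    exact .of_mul_eq_one_right _ hv.1
  have hcong : ZMod.castHom (Dvd.intro q hMq) (ZMod M) ((1 : ℕ) * b + 1) =
      ZMod.castHom (Dvd.intro q hMq) (ZMod M) d := by
    rw [← sub_eq_zero, ← map_sub, ZMod.castHom_eq_zero_iff_mul_eq_zero hMq hq]
    simp only [Int.cast_natCast] at hfix
    linear_combination hfix.1
  refine ⟨⟨!![1, 0; b, d], rfl, rfl, hd, hcong⟩, MulEquiv.ext fun v => ?_⟩
  change matGroupToMulAut _ (ofAdd (toAdd v)) = ofAdd (τ (toAdd v))
  rw [matGroupToMulAut_apply, formula, hs, mul_one]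
  simp [mul_comm]

def matGroupEquivStabilizer (hMq : M * q = N) :
    matGroup N M 1 (Dvd.intro q hMq) ≃*
      stabilizer (MulAut (Multiplicative (ZMod N × ℤ))) (ofAdd (-(q : ZMod N), (q : ℤ))) :=
  MulEquiv.ofBijective (matGroupToMulAut.codRestrict _ (matGroupToMulAut_mem_stabilizer hMq))
    ⟨fun _ _ h => matGroupToMulAut_injective (congrArg Subtype.val h),
      fun σ => (exists_matGroupToMulAut_eq hMq σ.2).imp fun _ h => Subtype.ext h⟩

end Stabilizer

def MulAut.stabilizerCongr {G H : Type*} [Group G] [Group H] (φ : G ≃* H) {x : G} {y : H}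
    (hxy : φ x = y) : stabilizer (MulAut G) x ≃* stabilizer (MulAut H) y :=
  ((MulAut.congr φ).subgroupMap _).trans <| MulEquiv.subgroupCongr <| by
    ext τ
    rw [Subgroup.map_equiv_eq_comap_symm, Subgroup.mem_comap, mem_stabilizer_iff,
      mem_stabilizer_iff, MulAut.smul_def, MulAut.smul_def, ← hxy]
    exact φ.symm_apply_eq

theorem MulAut.apply_eq_self_of_val_eq_neg_one {K : Type*} [CommRing K] [IsDomain K]
    {H : Subgroup Kˣ} (σ : MulAut H) {x : H} (hx : ((x : Kˣ) : K) = -1) : σ x = x := by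
  have hsq : x * x = 1 := Subtype.ext <| Units.ext <| by simp [hx]
  have hσsq : ((σ x : Kˣ) : K) * ((σ x : Kˣ) : K) = 1 := by
    rw [← Units.val_mul, ← Subgroup.coe_mul, ← map_mul, hsq, map_one]
    rfl
  rcases mul_self_eq_one_iff.mp hσsq with h | h
  · have h1 : σ x = σ 1 := (Subtype.ext (Units.ext h)).trans (map_one σ).symm
    rw [σ.injective h1, map_one]
  · exact Subtype.ext (Units.ext (h.trans hx.symm))

theorem aUnit_not_isOfFinOrder {a : ℤ} (ha : a ≠ 0) (ha1 : 1 < |a|) :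
    ¬IsOfFinOrder (aUnit a ha) := by
  intro h
  obtain ⟨n, hn, hpow⟩ := h.exists_pow_eq_one
  have : a ^ n = 1 := by
    have := congrArg Units.val hpow
    simp only [Units.val_pow_eq_pow_val, aUnit, Units.val_mk0, Units.val_one] at this
    exact_mod_cast this
  have := congrArg abs this
  rw [abs_pow, abs_one, pow_eq_one_iff_of_nonneg (abs_nonneg a) hn.ne'] at this
  exact ha1.ne' this

theorem autGroup_eq_stabilizer {a : ℤ} {ha : a ≠ 0} {N : ℕ} {r : ℤ} {ρ : radical a ha N}
    (hρ : ((ρ : Qbarˣ) : Qbar) = r)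
    (hrat : ∀ (y : ℚ) (m : ℤ), y ^ N = (a : ℚ) ^ m →
      ∃ s : ℤ, y = (r : ℚ) ^ s ∨ y = -(r : ℚ) ^ s) :
    autGroup a ha N = stabilizer (MulAut (radical a ha N)) ρ := by
  have hρs (s : ℤ) :
      (((ρ ^ s : radical a ha N) : Qbarˣ) : Qbar) = algebraMap ℚ Qbar ((r : ℚ) ^ s) := by
    simp [hρ]
  ext σ
  rw [mem_stabilizer_iff, MulAut.smul_def]
  refine ⟨fun hσ => hσ ρ ⟨r, by simp [hρ]⟩, fun hσ x ⟨y, hy⟩ => ?_⟩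
  obtain ⟨m, hm⟩ := Subgroup.mem_zpowers_iff.mp x.2
  have hyN : y ^ N = (a : ℚ) ^ m := by
    apply (algebraMap ℚ Qbar).injective
    have := congrArg Units.val hm
    simp only [Units.val_zpow_eq_zpow_val, powMonoidHom_apply, Units.val_pow_eq_pow_val, aUnit,
      Units.val_mk0] at this
    rw [map_pow, hy, map_zpow₀, map_intCast, this]
  obtain ⟨s, hs | hs⟩ := hrat y m hyN
  · obtain rfl : x = ρ ^ s := Subtype.ext (Units.ext (by rw [hρs, ← hs, hy]))
    rw [map_zpow, hσ]
  · have hε : (((x * (ρ ^ s)⁻¹ : radical a ha N) : Qbarˣ) : Qbar) = -1 := by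
      have hr0 : (r : ℚ) ^ s ≠ 0 := fun h0 =>
        ((ρ ^ s : radical a ha N) : Qbarˣ).ne_zero (by rw [hρs, h0, map_zero])
      rw [Subgroup.coe_mul, Subgroup.coe_inv, Units.val_mul, Units.val_inv_eq_inv_val, hρs, ← hy,
        hs, ← map_inv₀, ← map_mul, neg_mul, mul_inv_cancel₀ hr0, map_neg, map_one]
    rw [← inv_mul_cancel_right x (ρ ^ s), map_mul, map_zpow, hσ,
      MulAut.apply_eq_self_of_val_eq_neg_one σ hε]

theorem nonempty_autGroup_mulEquiv_matGroup {a : ℤ} (ha : a ≠ 0) (ha1 : 1 < |a|) {N M q : ℕ}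
    [NeZero N] (hMq : M * q = N) {r : ℤ} (hr : r ^ M = a)
    (hrat : ∀ (y : ℚ) (m : ℤ), y ^ N = (a : ℚ) ^ m →
      ∃ s : ℤ, y = (r : ℚ) ^ s ∨ y = -(r : ℚ) ^ s) :
    Nonempty (autGroup a ha N ≃* matGroup N M 1 (Dvd.intro q hMq)) := by
  have hq : q ≠ 0 := right_ne_zero_of_mul (hMq ▸ NeZero.ne N)
  obtain ⟨z, hz⟩ := HasEnoughRootsOfUnity.exists_primitiveRoot Qbar N
  obtain ⟨g, hg⟩ := IsAlgClosed.exists_pow_nat_eq (r : Qbar) (Nat.pos_of_ne_zero hq)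
  have hg0 : g ≠ 0 := by
    rintro rfl
    rw [zero_pow hq, eq_comm, Int.cast_eq_zero] at hg
    exact ha (by rw [← hr, hg, zero_pow (left_ne_zero_of_mul (hMq ▸ NeZero.ne N))])
  set ζ := (hz.isUnit (NeZero.ne N)).unit
  set γ := Units.mk0 g hg0
  have hζ : IsPrimitiveRoot ζ N := IsPrimitiveRoot.coe_units_iff.mp hz
  have hα : (ζ * γ) ^ N = aUnit a ha := by
    rw [mul_pow, hζ.pow_eq_one, one_mul, ← hMq, mul_comm, pow_mul]
    ext
    simp [γ, aUnit, hg, ← hr]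
  set φ := coordEquiv hζ hα (aUnit_not_isOfFinOrder ha ha1)
  have hρ : ((φ (ofAdd (-(q : ZMod N), (q : ℤ))) : Qbarˣ) : Qbar) = r := by
    rw [coordEquiv_apply, show -(q : ZMod N) = ((-(q : ℤ) : ℤ) : ZMod N) by push_cast; rfl,
      coordHom_apply_intCast, mul_zpow, ← mul_assoc, ← zpow_add, neg_add_cancel, zpow_zero,
      one_mul, zpow_natCast]
    simp [γ, hg]
  exact ⟨(MulEquiv.subgroupCongr (autGroup_eq_stabilizer hρ hrat)).trans
    ((MulAut.stabilizerCongr φ.symm (φ.symm_apply_apply _)).trans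
      (matGroupEquivStabilizer hMq).symm)⟩

theorem autGroup_iso_matGroup_untwisted_general
    (a : ℤ) (ha : a ≠ 0) (ha1 : a ≠ 1) (ham1 : a ≠ -1)
    (e : ℕ)
    (he : IsGreatest {m : ℕ | 0 < m ∧ ∃ b : ℕ, |a| = (b : ℤ) ^ m} e)
    (p : ℕ) (hp : p.Prime) (hcase : p ≠ 2 ∨ Odd e ∨ 0 < a) :
    ∀ k : ℕ, 1 ≤ k →
      Nonempty (↥(autGroup a ha (p ^ k)) ≃*
        ↥(matGroup (p ^ k) (p ^ min k (padicValNat p e)) 1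
          (pow_dvd_pow p (min_le_left k (padicValNat p e))))) := by
  intro k _
  have hN : 0 < p ^ k := pow_pos hp.pos k
  have : NeZero (p ^ k) := ⟨hN.ne'⟩
  have habs : 1 < |a| :=
    (Int.one_le_abs ha).lt_of_ne' fun h => ((abs_eq zero_le_one).mp h).elim ha1 ham1
  have hodd : Odd (Nat.gcd (p ^ k) e) ∨ 0 < a := by
    rcases hcase with hp2 | he_odd | hpos
    · exact Or.inl ((hp.odd_of_ne_two hp2).pow.of_dvd_nat (Nat.gcd_dvd_left _ _))
    · exact Or.inl (he_odd.of_dvd_nat (Nat.gcd_dvd_right _ _))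
    · exact Or.inr hpos
  obtain ⟨r, hr⟩ := Int.exists_pow_eq_of_dvd he.1.2 (Nat.gcd_dvd_right _ e) hodd
  exact nonempty_autGroup_mulEquiv_matGroup ha habs
    (Nat.mul_div_cancel' (pow_dvd_pow p (min_le_left k _)))
    (hp.gcd_pow_eq_pow_min k he.1.1.ne' ▸ hr)
    fun y m hy => exists_zpow_eq_or_neg_of_pow_eq_zpow he hN hr hy

/-- **Proposition 3.1 (ii), untwisted case**: if `p` is odd, or `p = 2` and (`e` is odd or
`a > 0`), then for every `k ≥ 1` the group `A(p^k)` is isomorphic to the group of matrices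
`(1 0; b d)` with `b ∈ ℤ/p^kℤ`, `d ∈ (ℤ/p^kℤ)^×` and `b + 1 ≡ d (mod p^{min(k, ν_p(e))})`. -/
theorem autGroup_iso_matGroup_untwisted
    (a : ℤ) (ha : a ≠ 0) (ha1 : a ≠ 1) (ham1 : a ≠ -1)
    (e : ℕ) (a₀ : ℤ)
    (he : IsGreatest {m : ℕ | 0 < m ∧ ∃ b : ℕ, |a| = (b : ℤ) ^ m} e)
    (ha₀ : |a₀| ^ e = |a|) (hsgn : a₀.sign = a.sign)
    (p : ℕ) (hp : p.Prime) (hcase : p ≠ 2 ∨ Odd e ∨ 0 < a) :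
    ∀ k : ℕ, 1 ≤ k →
      Nonempty (↥(autGroup a ha (p ^ k)) ≃*
        ↥(matGroup (p ^ k) (p ^ min k (padicValNat p e)) 1
          (pow_dvd_pow p (min_le_left k (padicValNat p e))))) :=
  autGroup_iso_matGroup_untwisted_general a ha ha1 ham1 e he p hp hcase
end
end

section
/- Suppose e is even and a < 0 (the twisted case); write e = 2^ν e₁ with ν = ν_2(e) ≥ 1 and e₁ odd, let a₁ be the positive integer with a₁^e = |a|, and set c = −a₁^{e₁} ∈ ℤ. Then every α ∈ Q̄ with α² = c lies in R_{2^{ν+2}}, and: (1) there exists an automorphism τ of R_{2^{ν+2}} fixing ℚ^× ∩ R_{2^{ν+2}} pointwise whose restriction to R_{2^{ν+1}} is the identity and which satisfies τ(α) = −α for every α with α² = c; (2) every automorphism τ′ of R_{2^{ν+3}} fixing ℚ^× ∩ R_{2^{ν+3}} pointwise whose restriction to R_{2^{ν+2}} is the identity satisfies τ′(α) = α for every α with α² = c. (Equivalently, s = ν_2(e)+2 is the smallest k for which the quadratic character ψ_{K,2} of A_2 = lim← A(2^j) factors through A(2^k).) -/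
noncomputable section

/-!
Put `N = 2^(ν+1)` and pick `s ∈ Q̄` with `s² = a`. Since `a` has infinite order, `a^k ↦ s^k`
is a well-defined homomorphism `φ` on `⟨a⟩`, and `φ(y)² = y`. Hence `χ(x) = x^N / φ(x^{2N})` is
a homomorphism `R_{2N} → {±1}`, and `x ↦ χ(x) x` is an automorphism of `R_{2N}`; it is an
involution because `χ(±1) = 1` for even `N`. It fixes `R_N`, on which `x^N ∈ ⟨a⟩` forces
`χ(x) = 1`, and it negates every square root `α` of `c`, for which `α^N = c^{2^ν} = -a` gives
`χ(α) = -a/a = -1`.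

It also fixes `ℚ^× ∩ R_{2N}`, because this group lies in `R_N`: if `r^{2N} = a^K` with `r`
rational, the sign of `a` forces `K = 2k`, then `r² = a₁^{e₁k}`, and since `a₁` is not a square
(`e` is maximal) and `e₁` is odd, `k` is even, so `r^N = |a|^k = a^k`. Part (2) is immediate, as
`α ∈ R_{2^{ν+2}}`.
-/

open Subgroup

section QuadraticTwist

variable {G : Type*} [CommGroup G] {A : G}

theorem zpowersHom_injective (hA : ¬IsOfFinOrder A) : Function.Injective (zpowersHom G A) :=
  fun _ _ h => Multiplicative.toAdd.injective (injective_zpow_iff_not_isOfFinOrder.mpr hA h)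

def zpowersLift (hA : ¬IsOfFinOrder A) (s : G) : zpowers A →* G :=
  (zpowersHom G s).comp (MonoidHom.ofInjective (zpowersHom_injective hA)).symm.toMonoidHom

theorem zpowersLift_zpow (hA : ¬IsOfFinOrder A) (s : G) (k : ℤ) :
    zpowersLift hA s ⟨A ^ k, k, rfl⟩ = s ^ k := by
  have hlog : (MonoidHom.ofInjective (zpowersHom_injective hA)).symm ⟨A ^ k, k, rfl⟩ =
      Multiplicative.ofAdd k :=
    (MulEquiv.symm_apply_eq _).mpr
      (Subtype.ext (MonoidHom.ofInjective_apply (zpowersHom_injective hA)).symm)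
  exact congrArg (zpowersHom G s) hlog

def radicalOf (A : G) (n : ℕ) : Subgroup G := (zpowers A).comap (powMonoidHom n)

theorem mem_radicalOf {n : ℕ} {x : G} : x ∈ radicalOf A n ↔ x ^ n ∈ zpowers A := Iff.rfl

variable (hA : ¬IsOfFinOrder A) (s : G) (N : ℕ)

def quadChar : radicalOf A (N * 2) →* G :=
  (powMonoidHom N).comp (radicalOf A (N * 2)).subtype /
    ((zpowersLift hA s).comp ((powMonoidHom (N * 2)).subgroupComap (zpowers A)) :
      radicalOf A (N * 2) →* G)

theorem quadChar_apply (x : radicalOf A (N * 2)) :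
    quadChar hA s N x = (x : G) ^ N / zpowersLift hA s ⟨(x : G) ^ (N * 2), x.2⟩ := rfl

variable {hA s N}

theorem quadChar_eq_of_pow_eq_mul (hs : s ^ 2 = A) {x : radicalOf A (N * 2)} {u : G}
    (hu : u ^ 2 = 1) {k : ℤ} (hx : (x : G) ^ N = u * A ^ k) : quadChar hA s N x = u := by
  have hx2 : (⟨(x : G) ^ (N * 2), x.2⟩ : zpowers A) = ⟨A ^ (2 * k), 2 * k, rfl⟩ :=
    Subtype.ext <| show (x : G) ^ (N * 2) = A ^ (2 * k) by
      rw [pow_mul, hx, mul_pow, hu, one_mul, ← zpow_natCast, ← zpow_mul, mul_comm]; rfl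
  have hsk : s ^ (2 * k) = A ^ k := by rw [zpow_mul, ← hs]; norm_cast
  rw [quadChar_apply, hx2, zpowersLift_zpow, hx, hsk, mul_div_cancel_right]

theorem quadChar_sq (hs : s ^ 2 = A) (x : radicalOf A (N * 2)) : quadChar hA s N x ^ 2 = 1 := by
  obtain ⟨k, hk⟩ := mem_zpowers_iff.mp (mem_radicalOf.mp x.2)
  have hx2 : (⟨(x : G) ^ (N * 2), x.2⟩ : zpowers A) = ⟨A ^ k, k, rfl⟩ := Subtype.ext hk.symm
  rw [quadChar_apply, hx2, zpowersLift_zpow, div_pow, ← pow_mul, ← hk, ← zpow_natCast,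
    ← zpow_mul, mul_comm, zpow_mul, zpow_natCast, hs, div_self']

theorem quadChar_mem (hs : s ^ 2 = A) (x : radicalOf A (N * 2)) :
    quadChar hA s N x ∈ radicalOf A (N * 2) := by
  rw [mem_radicalOf, pow_mul', quadChar_sq hs, one_pow]
  exact one_mem _

theorem quadChar_quadChar (hs : s ^ 2 = A) (hN : Even N) (x : radicalOf A (N * 2)) :
    quadChar hA s N ⟨quadChar hA s N x, quadChar_mem hs x⟩ = 1 := by
  refine quadChar_eq_of_pow_eq_mul hs (one_pow 2) (k := 0) ?_
  rw [zpow_zero, mul_one]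
  exact orderOf_dvd_iff_pow_eq_one.mp
    ((orderOf_dvd_of_pow_eq_one (quadChar_sq hs x)).trans hN.two_dvd)

def twist (hA : ¬IsOfFinOrder A) (hs : s ^ 2 = A) (hN : Even N) :
    MulAut (radicalOf A (N * 2)) :=
  MulEquiv.mk'
    (Function.Involutive.toPerm (fun x => ⟨quadChar hA s N x, quadChar_mem hs x⟩ * x) <| by
      intro x
      ext
      change quadChar hA s N (⟨quadChar hA s N x, quadChar_mem hs x⟩ * x) *
        (quadChar hA s N x * x) = x
      rw [map_mul, quadChar_quadChar hs hN, one_mul, ← mul_assoc, ← sq, quadChar_sq hs, one_mul])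
    (fun x y => by
      ext
      change quadChar hA s N (x * y) * (x * y : G) =
        quadChar hA s N x * x * (quadChar hA s N y * y)
      rw [map_mul, mul_mul_mul_comm])

theorem twist_apply (hs : s ^ 2 = A) (hN : Even N) (x : radicalOf A (N * 2)) :
    (twist hA hs hN x : G) = quadChar hA s N x * x := rfl

theorem twist_eq_self_of_mem (hs : s ^ 2 = A) (hN : Even N) {x : radicalOf A (N * 2)}
    (hx : (x : G) ∈ radicalOf A N) : twist hA hs hN x = x := by
  obtain ⟨k, hk⟩ := mem_zpowers_iff.mp (mem_radicalOf.mp hx)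
  ext
  rw [twist_apply, quadChar_eq_of_pow_eq_mul hs (one_pow 2) (by rw [one_mul, hk]), one_mul]

theorem twist_eq_of_pow_eq_mul (hs : s ^ 2 = A) (hN : Even N) {x : radicalOf A (N * 2)} {u : G}
    (hu : u ^ 2 = 1) (hx : (x : G) ^ N = u * A) : (twist hA hs hN x : G) = u * x := by
  rw [twist_apply, quadChar_eq_of_pow_eq_mul hs hu (k := 1) (by rw [zpow_one, hx])]

end QuadraticTwist

theorem Units.exists_sq_eq_of_isAlgClosed {K : Type*} [Field K] [IsAlgClosed K] (u : Kˣ) :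
    ∃ s : Kˣ, s ^ 2 = u := by
  obtain ⟨z, hz⟩ := IsAlgClosed.exists_pow_nat_eq (u : K) two_pos
  have hz0 : z ≠ 0 := by
    rintro rfl
    exact u.ne_zero (by rw [← hz, zero_pow two_ne_zero])
  exact ⟨Units.mk0 z hz0, Units.ext (by simpa using hz)⟩

theorem even_of_sq_eq_zpow {n : ℕ} (hn : ¬IsSquare n) {q : ℚ} {j : ℤ}
    (h : q ^ 2 = (n : ℚ) ^ j) : Even j := by
  by_contra hj
  obtain ⟨i, rfl⟩ := Int.not_even_iff_odd.mp hj
  have hn0 : (n : ℚ) ≠ 0 := fun h0 => hn (Nat.cast_eq_zero.mp h0 ▸ IsSquare.zero)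
  refine hn (Rat.isSquare_natCast_iff.mp ⟨q * (n : ℚ) ^ (-i), ?_⟩)
  rw [mul_mul_mul_comm, ← sq, h, ← zpow_add₀ hn0, ← zpow_add₀ hn0]
  ring_nf
  exact (zpow_one _).symm

theorem not_isSquare_of_isGreatest {a : ℤ} {e a₁ : ℕ}
    (he : IsGreatest {m : ℕ | 0 < m ∧ ∃ b : ℕ, |a| = (b : ℤ) ^ m} e)
    (ha₁ : (a₁ : ℤ) ^ e = |a|) : ¬IsSquare a₁ := by
  rintro ⟨d, rfl⟩
  have h2e : 2 * e ∈ {m : ℕ | 0 < m ∧ ∃ b : ℕ, |a| = (b : ℤ) ^ m} :=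
    ⟨by linarith [he.1.1], d, by rw [← ha₁]; push_cast; ring⟩
  linarith [he.2 h2e, he.1.1]

theorem exists_pow_eq_zpow_of_pow_eq_zpow {a : ℤ} {a₁ ν e₁ : ℕ} (ha : a < 0)
    (ha₁ : ¬IsSquare a₁) (he₁ : Odd e₁) (habs : |a| = (a₁ : ℤ) ^ (2 ^ ν * e₁))
    {r : ℚ} {K : ℤ} (h : r ^ 2 ^ (ν + 2) = (a : ℚ) ^ K) :
    ∃ k : ℤ, r ^ 2 ^ (ν + 1) = (a : ℚ) ^ k := by
  have hK : Even K := by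
    by_contra hK
    have hneg : (a : ℚ) ^ K < 0 := (Int.not_even_iff_odd.mp hK).zpow_neg (by exact_mod_cast ha)
    rw [← h] at hneg
    exact hneg.not_ge (Even.pow_nonneg (Nat.even_pow.mpr ⟨even_two, by omega⟩) r)
  obtain ⟨k, rfl⟩ := hK
  have habsQ : |(a : ℚ)| = (a₁ : ℚ) ^ (2 ^ ν * e₁) := by exact_mod_cast habs
  have h1 : r ^ 2 ^ (ν + 1) = |(a : ℚ)| ^ k := by
    rw [← pow_left_inj₀ (Even.pow_nonneg (Nat.even_pow.mpr ⟨even_two, by omega⟩) r)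
      (zpow_nonneg (abs_nonneg _) _) two_ne_zero, ← pow_mul, ← pow_succ, h, ← zpow_natCast,
      ← zpow_mul, Even.zpow_abs ⟨k, by push_cast; ring⟩]
    congr 1
    push_cast
    ring
  have h2 : r ^ 2 = (a₁ : ℚ) ^ ((e₁ : ℤ) * k) := by
    rw [← pow_left_inj₀ (sq_nonneg r) (zpow_nonneg (Nat.cast_nonneg _) _)
      (pow_ne_zero ν two_ne_zero), ← pow_mul, ← pow_succ', h1, habsQ, ← zpow_natCast,
      ← zpow_natCast, ← zpow_mul, ← zpow_mul]
    push_cast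
    ring_nf
  have hk : Even k := (Int.even_mul.mp (even_of_sq_eq_zpow ha₁ h2)).resolve_left
    (Int.not_even_iff_odd.mpr (by exact_mod_cast he₁))
  exact ⟨k, by rw [h1, hk.zpow_abs]⟩

section Radical

variable {a : ℤ} (ha : a ≠ 0)

theorem not_isOfFinOrder_aUnit (ha1 : a ≠ 1) (ham1 : a ≠ -1) :
    ¬IsOfFinOrder (aUnit a ha) := by
  rw [isOfFinOrder_iff_pow_eq_one]
  rintro ⟨n, hn, h⟩
  have hpow : a ^ n = 1 := by
    have : (a : Qbar) ^ n = 1 := by simpa [aUnit] using congrArg Units.val h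
    exact_mod_cast this
  have habs : |a| = 1 :=
    (pow_eq_one_iff_of_nonneg (abs_nonneg a) hn.ne').mp (by rw [← abs_pow, hpow, abs_one])
  rcases (abs_eq zero_le_one).mp habs with h1 | h1
  exacts [ha1 h1, ham1 h1]

theorem units_pow_eq_aUnit_zpow_iff {x : Qbarˣ} {r : ℚ} (hx : (x : Qbar) = algebraMap ℚ Qbar r)
    {n : ℕ} {k : ℤ} : x ^ n = aUnit a ha ^ k ↔ r ^ n = (a : ℚ) ^ k := by
  rw [Units.ext_iff, Units.val_pow_eq_pow_val, Units.val_zpow_eq_zpow_val, hx, aUnit,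
    Units.val_mk0, ← map_pow, ← map_intCast (algebraMap ℚ Qbar), ← map_zpow₀,
    (algebraMap ℚ Qbar).injective.eq_iff]

theorem units_pow_two_mul_eq_neg_aUnit {α : Qbarˣ} {c : ℤ} {n : ℕ} (hc : c ^ n = -a)
    (hα : (α : Qbar) ^ 2 = c) : α ^ (2 * n) = -aUnit a ha := by
  ext
  rw [Units.val_pow_eq_pow_val, pow_mul, hα, Units.val_neg, aUnit, Units.val_mk0]
  exact_mod_cast hc

theorem mem_radical_of_mem_range_algebraMap {a₁ ν e₁ : ℕ} (hneg : a < 0) (ha₁ : ¬IsSquare a₁)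
    (he₁ : Odd e₁) (habs : |a| = (a₁ : ℤ) ^ (2 ^ ν * e₁)) {x : Qbarˣ}
    (hx : x ∈ radical a ha (2 ^ (ν + 2))) (hr : (x : Qbar) ∈ Set.range (algebraMap ℚ Qbar)) :
    x ∈ radical a ha (2 ^ (ν + 1)) := by
  obtain ⟨r, hr⟩ := hr
  obtain ⟨K, hK⟩ := mem_zpowers_iff.mp (mem_comap.mp hx)
  obtain ⟨k, hk⟩ := exists_pow_eq_zpow_of_pow_eq_zpow hneg ha₁ he₁ habs
    ((units_pow_eq_aUnit_zpow_iff ha hr.symm).mp hK.symm)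
  exact mem_zpowers_iff.mpr ⟨k, ((units_pow_eq_aUnit_zpow_iff ha hr.symm).mpr hk).symm⟩

end Radical

theorem psi_factoring_twisted_general
    (a : ℤ) (ha : a ≠ 0) (ha1 : a ≠ 1) (ham1 : a ≠ -1)
    (e : ℕ)
    (he : IsGreatest {m : ℕ | 0 < m ∧ ∃ b : ℕ, |a| = (b : ℤ) ^ m} e)
    (htw : Even e ∧ a < 0)
    (ν e₁ : ℕ) (hν1 : 1 ≤ ν) (he₁ : Odd e₁)
    (hee : e = 2 ^ ν * e₁)
    (a₁ : ℕ) (ha₁ : ((a₁ : ℤ)) ^ e = |a|)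
    (c : ℤ) (hc : c = -((a₁ : ℤ)) ^ e₁) :
    (∀ α : Qbarˣ, ((α : Qbar)) ^ 2 = (c : Qbar) → α ∈ radical a ha (2 ^ (ν + 2))) ∧
    (∃ τ ∈ autGroup a ha (2 ^ (ν + 2)),
      (∀ x : ↥(radical a ha (2 ^ (ν + 2))),
          (x : Qbarˣ) ∈ radical a ha (2 ^ (ν + 1)) → τ x = x) ∧
      ∀ (α : Qbarˣ) (hmem : α ∈ radical a ha (2 ^ (ν + 2))),
        ((α : Qbar)) ^ 2 = (c : Qbar) →
          ((τ ⟨α, hmem⟩ : Qbarˣ) : Qbar) = -(α : Qbar)) ∧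
    (∀ τ' ∈ autGroup a ha (2 ^ (ν + 3)),
      (∀ x : ↥(radical a ha (2 ^ (ν + 3))),
          (x : Qbarˣ) ∈ radical a ha (2 ^ (ν + 2)) → τ' x = x) →
      ∀ (α : Qbarˣ) (hmem : α ∈ radical a ha (2 ^ (ν + 3))),
        ((α : Qbar)) ^ 2 = (c : Qbar) →
          ((τ' ⟨α, hmem⟩ : Qbarˣ) : Qbar) = (α : Qbar)) := by
  have hA := not_isOfFinOrder_aUnit ha ha1 ham1
  obtain ⟨s, hs⟩ := Units.exists_sq_eq_of_isAlgClosed (aUnit a ha)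
  have hN : Even (2 ^ (ν + 1)) := Nat.even_pow.mpr ⟨even_two, by omega⟩
  have habs : |a| = (a₁ : ℤ) ^ (2 ^ ν * e₁) := hee ▸ ha₁.symm
  have hc2 : c ^ 2 ^ ν = -a := by
    rw [hc, Even.neg_pow (Nat.even_pow.mpr ⟨even_two, by omega⟩), ← pow_mul, mul_comm, ← habs,
      abs_of_neg htw.2]
  have hroot (α : Qbarˣ) (hα : (α : Qbar) ^ 2 = c) : α ^ 2 ^ (ν + 1) = -aUnit a ha := by
    rw [pow_succ', units_pow_two_mul_eq_neg_aUnit ha hc2 hα]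
  have hmem (α : Qbarˣ) (hα : (α : Qbar) ^ 2 = c) : α ∈ radical a ha (2 ^ (ν + 2)) :=
    mem_zpowers_iff.mpr ⟨2, show aUnit a ha ^ (2 : ℤ) = α ^ 2 ^ (ν + 2) by
      rw [pow_succ, pow_mul, hroot α hα, neg_sq, zpow_ofNat]⟩
  refine ⟨hmem, ⟨twist hA hs hN, fun x hx => twist_eq_self_of_mem hs hN ?_,
    fun x hx => twist_eq_self_of_mem hs hN hx, fun α hα hαc => ?_⟩,
    fun τ' _ hid α hα hαc => by rw [hid ⟨α, hα⟩ (hmem α hαc)]⟩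
  · exact mem_radical_of_mem_range_algebraMap ha htw.2 (not_isSquare_of_isGreatest he ha₁) he₁
      habs x.2 hx
  · have hτ := twist_eq_of_pow_eq_mul (hA := hA) (x := ⟨α, hα⟩) hs hN neg_one_sq
      (by rw [neg_one_mul]; exact hroot α hαc)
    exact (congrArg Units.val hτ).trans (by simp)

/-- **Proposition 3.2, twisted case** (`e` even, `a < 0`, `e = 2^ν e₁` with `e₁` odd,
`c = −a₁^{e₁}`): every square root `α` of `c` lies in `R_{2^{ν+2}}`; there is an
automorphism of `R_{2^{ν+2}}` fixing `ℚ^× ∩ R_{2^{ν+2}}` pointwise, restricting to the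
identity on `R_{2^{ν+1}}`, and sending each such `α` to `−α`; and every automorphism of
`R_{2^{ν+3}}` fixing `ℚ^× ∩ R_{2^{ν+3}}` pointwise and restricting to the identity on
`R_{2^{ν+2}}` fixes each such `α`. (Equivalently, `s = ν₂(e)+2` is the smallest `k` for
which `ψ_{K,2}` factors through `A(2^k)`.) -/
theorem psi_factoring_twisted
    (a : ℤ) (ha : a ≠ 0) (ha1 : a ≠ 1) (ham1 : a ≠ -1)
    (e : ℕ) (a₀ : ℤ)
    (he : IsGreatest {m : ℕ | 0 < m ∧ ∃ b : ℕ, |a| = (b : ℤ) ^ m} e)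
    (ha₀ : |a₀| ^ e = |a|) (hsgn : a₀.sign = a.sign)
    (htw : Even e ∧ a < 0)
    (ν e₁ : ℕ) (hν : ν = padicValNat 2 e) (hν1 : 1 ≤ ν) (he₁ : Odd e₁)
    (hee : e = 2 ^ ν * e₁)
    (a₁ : ℕ) (ha₁ : ((a₁ : ℤ)) ^ e = |a|)
    (c : ℤ) (hc : c = -((a₁ : ℤ)) ^ e₁) :
    (∀ α : Qbarˣ, ((α : Qbar)) ^ 2 = (c : Qbar) → α ∈ radical a ha (2 ^ (ν + 2))) ∧
    (∃ τ ∈ autGroup a ha (2 ^ (ν + 2)),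
      (∀ x : ↥(radical a ha (2 ^ (ν + 2))),
          (x : Qbarˣ) ∈ radical a ha (2 ^ (ν + 1)) → τ x = x) ∧
      ∀ (α : Qbarˣ) (hmem : α ∈ radical a ha (2 ^ (ν + 2))),
        ((α : Qbar)) ^ 2 = (c : Qbar) →
          ((τ ⟨α, hmem⟩ : Qbarˣ) : Qbar) = -(α : Qbar)) ∧
    (∀ τ' ∈ autGroup a ha (2 ^ (ν + 3)),
      (∀ x : ↥(radical a ha (2 ^ (ν + 3))),
          (x : Qbarˣ) ∈ radical a ha (2 ^ (ν + 2)) → τ' x = x) →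
      ∀ (α : Qbarˣ) (hmem : α ∈ radical a ha (2 ^ (ν + 3))),
        ((α : Qbar)) ^ 2 = (c : Qbar) →
          ((τ' ⟨α, hmem⟩ : Qbarˣ) : Qbar) = (α : Qbar)) :=
  psi_factoring_twisted_general a ha ha1 ham1 e he htw ν e₁ hν1 he₁ hee a₁ ha₁ c hc
end
end

section
/- Suppose e is odd or a > 0 (the untwisted case); write e = 2^ν e₁ with ν = ν_2(e) and e₁ odd, let a₁ be the positive integer with a₁^e = |a|, and set c = sgn(a)·a₁^{e₁} ∈ ℤ. Then every α ∈ Q̄ with α² = c lies in R_{2^{ν+1}}, and: (1) there exists an automorphism τ of R_{2^{ν+1}} fixing ℚ^× ∩ R_{2^{ν+1}} pointwise whose restriction to R_{2^{ν}} is the identity and which satisfies τ(α) = −α for every α with α² = c; (2) every automorphism τ′ of R_{2^{ν+2}} fixing ℚ^× ∩ R_{2^{ν+2}} pointwise whose restriction to R_{2^{ν+1}} is the identity satisfies τ′(α) = α for every α with α² = c. (Equivalently, s = ν_2(e)+1 is the smallest k for which the quadratic character ψ_{K,2} of A_2 = lim← A(2^j) factors through A(2^k).) -/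
noncomputable section

/-!
Write `n = 2^(ν+1)`. Every `x ∈ R_n` has `x^n = a^k` for a unique `k = K(x) ∈ ℤ`, and `K` is a
homomorphism, so `x ↦ x·(-1)^{K(x)}` is an automorphism of `R_n`. In the untwisted case
`c^(2^ν) = a`, so a square root `α` of `c` has `K(α) = 1` and is negated. An element of `R_{2^ν}`
has even `K`. So has a rational `q ∈ R_n`: if `q^n = a^k` with `k` odd, then `|a|` would be a
perfect `n`-th power as well as a perfect `e`-th power, hence (`e / 2^ν` being odd) a perfect
`2e`-th power, against the maximality of `e`. Part (2) is immediate, since `α` already lies in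
`R_{2^{ν+1}}`.
-/

open Function Subgroup Multiplicative

namespace MulAut

variable {G : Type*} [CommGroup G]

def transvection (σ : G →* G) (hσ : ∀ x, σ (σ x) = 1) : MulAut G where
  toFun x := x * σ x
  invFun x := x * (σ x)⁻¹
  left_inv x := by simp [hσ]
  right_inv x := by simp [hσ]
  map_mul' x y := by simp only [map_mul, mul_mul_mul_comm]

@[simp]
theorem transvection_apply (σ : G →* G) (hσ : ∀ x, σ (σ x) = 1) (x : G) :
    transvection σ hσ x = x * σ x :=
  rfl

end MulAut

section RadicalExponent

variable {G : Type*} [CommGroup G] {A : G} (hA : Injective (A ^ · : ℤ → G)) (n : ℕ)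

def radicalExponent : (zpowers A).comap (powMonoidHom n) →* Multiplicative ℤ :=
  (MonoidHom.ofInjective (f := zpowersHom G A) hA).symm.toMonoidHom.comp
    ((powMonoidHom n).subgroupComap (zpowers A))

variable {n}

theorem radicalExponent_eq_ofAdd_iff {x : (zpowers A).comap (powMonoidHom n)} {k : ℤ} :
    radicalExponent hA n x = ofAdd k ↔ (x : G) ^ n = A ^ k := by
  change (MonoidHom.ofInjective hA).symm _ = _ ↔ _
  rw [MulEquiv.symm_apply_eq, Subtype.ext_iff]
  exact Iff.rfl

theorem pow_eq_zpow_radicalExponent (x : (zpowers A).comap (powMonoidHom n)) :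
    (x : G) ^ n = A ^ toAdd (radicalExponent hA n x) :=
  (radicalExponent_eq_ofAdd_iff hA).1 rfl

theorem even_radicalExponent_of_pow_mem {m : ℕ} (hnm : n = m * 2)
    (x : (zpowers A).comap (powMonoidHom n)) (hx : (x : G) ^ m ∈ zpowers A) :
    Even (toAdd (radicalExponent hA n x)) := by
  obtain ⟨j, hj⟩ := hx
  subst hnm
  have hK : radicalExponent hA _ x = ofAdd (j + j) := (radicalExponent_eq_ofAdd_iff hA).2 <| by
    rw [pow_mul, ← hj, ← zpow_natCast, ← zpow_mul, Nat.cast_two, mul_two]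
  exact ⟨j, by rw [hK, toAdd_ofAdd]⟩

theorem mem_comap_powMonoidHom_zpowers_of_pow_eq_one {ε : G} (hε : ε ^ n = 1) :
    ε ∈ (zpowers A).comap (powMonoidHom n) :=
  mem_comap.2 (by simp [hε])

variable {ε : G} (hε : ε ^ n = 1)

def radicalTwist : MulAut ((zpowers A).comap (powMonoidHom n)) :=
  MulAut.transvection
    ((zpowersHom _ ⟨ε, mem_comap_powMonoidHom_zpowers_of_pow_eq_one hε⟩).comp
      (radicalExponent hA n)) fun x => by
      have hKε : radicalExponent hA n ⟨ε, mem_comap_powMonoidHom_zpowers_of_pow_eq_one hε⟩ = 1 :=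
        (radicalExponent_eq_ofAdd_iff hA (k := 0)).2 (by simp [hε])
      simp only [MonoidHom.comp_apply, zpowersHom_apply, map_zpow, hKε, one_zpow, toAdd_one,
        zpow_zero]

theorem coe_radicalTwist_apply (x : (zpowers A).comap (powMonoidHom n)) :
    ((radicalTwist hA hε x : (zpowers A).comap (powMonoidHom n)) : G) =
      (x : G) * ε ^ toAdd (radicalExponent hA n x) := by
  simp [radicalTwist]

theorem radicalTwist_apply_of_even (hε2 : ε ^ 2 = 1) {x : (zpowers A).comap (powMonoidHom n)}
    (hx : Even (toAdd (radicalExponent hA n x))) : radicalTwist hA hε x = x := by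
  obtain ⟨j, hj⟩ := hx
  ext
  rw [coe_radicalTwist_apply, hj, ← two_mul, zpow_mul, zpow_ofNat, hε2, one_zpow, mul_one]

end RadicalExponent

theorem Int.cast_zpow_injective {K : Type*} [Field K] [CharZero K] {a : ℤ} (h0 : a ≠ 0)
    (h1 : a ≠ 1) (hm1 : a ≠ -1) : Injective fun k : ℤ => (a : K) ^ k := by
  intro j k h
  have hq : (a : ℚ) ^ j = (a : ℚ) ^ k := Rat.cast_injective (α := K) (by push_cast; exact h)
  refine zpow_right_injective₀ (a := |(a : ℚ)|) (abs_pos.2 (Int.cast_ne_zero.2 h0))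
    (fun habs => ?_) (by simp only [← abs_zpow, hq])
  rcases (abs_eq zero_le_one).1 habs with h | h
  · exact h1 (by exact_mod_cast h)
  · exact hm1 (by exact_mod_cast h)

theorem sign_mul_pow_pow_two_pow {a : ℤ} {e ν e₁ a₁ : ℕ} (hee : e = 2 ^ ν * e₁)
    (ha₁ : (a₁ : ℤ) ^ e = |a|) (huntw : Odd e ∨ 0 < a) :
    (a.sign * (a₁ : ℤ) ^ e₁) ^ 2 ^ ν = a := by
  rcases huntw with hodd | hpos
  · obtain rfl : ν = 0 := by
      by_contra hν
      exact Nat.not_even_iff_odd.2 hodd (hee ▸ (Nat.even_pow.2 ⟨even_two, hν⟩).mul_right e₁)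
    rw [pow_zero, one_mul] at hee
    rw [pow_zero, pow_one, ← hee, ha₁, Int.sign_mul_abs]
  · rw [Int.sign_eq_one_of_pos hpos, one_mul, ← pow_mul, mul_comm, ← hee, ha₁, abs_of_pos hpos]

theorem Int.exists_eq_pow_of_rat_pow_eq_zpow {a : ℤ} (ha : a ≠ 0) {q : ℚ} {n : ℕ} {k : ℤ}
    (hn : n ≠ 0) (hnk : IsCoprime (n : ℤ) k) (h : q ^ n = (a : ℚ) ^ k) : ∃ b : ℤ, a = b ^ n := by
  obtain ⟨u, v, huv⟩ := hnk
  have hroot : ((a : ℚ) ^ u * q ^ v) ^ n = a := by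
    calc ((a : ℚ) ^ u * q ^ v) ^ n = (a : ℚ) ^ (u * n) * (q ^ n) ^ v := by
          rw [mul_pow, ← zpow_natCast, ← zpow_natCast (q ^ v), ← zpow_mul, ← zpow_mul,
            ← zpow_natCast q, ← zpow_mul, mul_comm v]
      _ = (a : ℚ) ^ (u * n + v * k) := by
          rw [h, ← zpow_mul, zpow_add₀ (by exact_mod_cast ha), mul_comm k]
      _ = a := by rw [huv, zpow_one]
  obtain ⟨b, hb⟩ := IsIntegrallyClosed.exists_algebraMap_eq_of_isIntegral_pow (R := ℤ)
    (x := (a : ℚ) ^ u * q ^ v) (Nat.pos_of_ne_zero hn)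
    (by rw [hroot, ← eq_intCast (algebraMap ℤ ℚ)]; exact isIntegral_algebraMap)
  refine ⟨b, Int.cast_injective (α := ℚ) ?_⟩
  rw [← hroot, Int.cast_pow, ← hb, eq_intCast]

theorem even_of_rat_pow_eq_zpow {a : ℤ} (ha : a ≠ 0) {e ν e₁ : ℕ}
    (he : IsGreatest {m : ℕ | 0 < m ∧ ∃ b : ℕ, |a| = (b : ℤ) ^ m} e) (he₁ : Odd e₁)
    (hee : e = 2 ^ ν * e₁) {q : ℚ} {k : ℤ} (h : q ^ 2 ^ (ν + 1) = (a : ℚ) ^ k) : Even k := by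
  by_contra hk
  obtain ⟨b, hb⟩ := Int.exists_eq_pow_of_rat_pow_eq_zpow ha (by positivity)
    (by push_cast; exact (Int.isCoprime_two_left.2 (Int.not_even_iff_odd.1 hk)).pow_left) h
  obtain ⟨d, hd⟩ := he.1.2
  have hd0 : (d : ℤ) ≠ 0 := by
    rintro hd0
    rw [hd0, zero_pow he.1.1.ne', abs_eq_zero] at hd
    exact ha hd
  have hsq : (d : ℤ) ^ e₁ = |b| ^ 2 := by
    refine (pow_left_inj₀ (by positivity) (by positivity) (pow_ne_zero ν two_ne_zero)).1 ?_
    rw [← pow_mul, mul_comm, ← hee, ← hd, hb, abs_pow, ← pow_mul, ← pow_succ']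
  obtain ⟨f, hf⟩ := Int.exists_eq_pow_of_rat_pow_eq_zpow hd0 (q := |b|) (k := e₁) two_ne_zero
    (Int.isCoprime_two_left.2 (by exact_mod_cast he₁))
    (by rw [zpow_natCast]; exact_mod_cast hsq.symm)
  have h2e : 2 * e ∈ {m : ℕ | 0 < m ∧ ∃ b : ℕ, |a| = (b : ℤ) ^ m} := by
    refine ⟨by linarith [he.1.1], f.natAbs, ?_⟩
    rw [hd, hf, Int.natCast_natAbs, pow_mul, sq_abs, ← pow_mul]
  linarith [he.2 h2e, he.1.1]

theorem aUnit_zpow_injective {a : ℤ} (ha : a ≠ 0) (ha1 : a ≠ 1) (ham1 : a ≠ -1) :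
    Injective (aUnit a ha ^ · : ℤ → Qbarˣ) := fun _ _ h =>
  Int.cast_zpow_injective (K := Qbar) ha ha1 ham1 (by simpa [aUnit] using congrArg Units.val h)

theorem rat_pow_eq_zpow_of_pow_eq_aUnit_zpow {a : ℤ} (ha : a ≠ 0) {x : Qbarˣ} {q : ℚ}
    (hq : algebraMap ℚ Qbar q = x) {n : ℕ} {k : ℤ} (h : x ^ n = aUnit a ha ^ k) :
    q ^ n = (a : ℚ) ^ k :=
  (algebraMap ℚ Qbar).injective <| by
    rw [map_pow, map_zpow₀, map_intCast, hq]
    simpa [aUnit] using congrArg Units.val h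

theorem psi_factoring_untwisted_general
    (a : ℤ) (ha : a ≠ 0) (ha1 : a ≠ 1) (ham1 : a ≠ -1)
    (e : ℕ)
    (he : IsGreatest {m : ℕ | 0 < m ∧ ∃ b : ℕ, |a| = (b : ℤ) ^ m} e)
    (huntw : Odd e ∨ 0 < a)
    (ν e₁ : ℕ) (he₁ : Odd e₁)
    (hee : e = 2 ^ ν * e₁)
    (a₁ : ℕ) (ha₁ : ((a₁ : ℤ)) ^ e = |a|)
    (c : ℤ) (hc : c = a.sign * ((a₁ : ℤ)) ^ e₁) :
    (∀ α : Qbarˣ, ((α : Qbar)) ^ 2 = (c : Qbar) → α ∈ radical a ha (2 ^ (ν + 1))) ∧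
    (∃ τ ∈ autGroup a ha (2 ^ (ν + 1)),
      (∀ x : ↥(radical a ha (2 ^ (ν + 1))),
          (x : Qbarˣ) ∈ radical a ha (2 ^ ν) → τ x = x) ∧
      ∀ (α : Qbarˣ) (hmem : α ∈ radical a ha (2 ^ (ν + 1))),
        ((α : Qbar)) ^ 2 = (c : Qbar) →
          ((τ ⟨α, hmem⟩ : Qbarˣ) : Qbar) = -(α : Qbar)) ∧
    (∀ τ' ∈ autGroup a ha (2 ^ (ν + 2)),
      (∀ x : ↥(radical a ha (2 ^ (ν + 2))),
          (x : Qbarˣ) ∈ radical a ha (2 ^ (ν + 1)) → τ' x = x) →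
      ∀ (α : Qbarˣ) (hmem : α ∈ radical a ha (2 ^ (ν + 2))),
        ((α : Qbar)) ^ 2 = (c : Qbar) →
          ((τ' ⟨α, hmem⟩ : Qbarˣ) : Qbar) = (α : Qbar)) := by
  have hA := aUnit_zpow_injective ha ha1 ham1
  have hca : (c : Qbar) ^ 2 ^ ν = a := by
    exact_mod_cast hc ▸ sign_mul_pow_pow_two_pow hee ha₁ huntw
  have hroot : ∀ α : Qbarˣ, (α : Qbar) ^ 2 = c → α ^ 2 ^ (ν + 1) = aUnit a ha := fun α hα =>
    Units.ext (by rw [Units.val_pow_eq_pow_val, pow_succ', pow_mul, hα, hca]; rfl)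
  have hmem : ∀ α : Qbarˣ, (α : Qbar) ^ 2 = c → α ∈ radical a ha (2 ^ (ν + 1)) := fun α hα =>
    mem_comap.2 (hroot α hα ▸ mem_zpowers _)
  have hε : (-1 : Qbarˣ) ^ 2 ^ (ν + 1) = 1 :=
    (Nat.even_pow.2 ⟨even_two, ν.succ_ne_zero⟩).neg_one_pow
  refine ⟨hmem, ⟨radicalTwist hA hε, fun x ⟨q, hq⟩ => ?_, fun x hx => ?_, fun α hα hα2 => ?_⟩,
    fun τ' _ hid α _ hα2 => by rw [hid _ (hmem α hα2)]⟩
  · exact radicalTwist_apply_of_even hA hε (by norm_num) (even_of_rat_pow_eq_zpow ha he he₁ hee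
      (rat_pow_eq_zpow_of_pow_eq_aUnit_zpow ha hq (pow_eq_zpow_radicalExponent hA x)))
  · exact radicalTwist_apply_of_even hA hε (by norm_num)
      (even_radicalExponent_of_pow_mem hA (pow_succ 2 ν) x hx)
  · have hK : radicalExponent hA _ ⟨α, hα⟩ = ofAdd 1 :=
      (radicalExponent_eq_ofAdd_iff hA).2 (by rw [zpow_one]; exact hroot α hα2)
    have hτα := coe_radicalTwist_apply hA hε ⟨α, hα⟩
    rw [hK, toAdd_ofAdd, zpow_one] at hτα
    exact (congrArg Units.val hτα).trans (by simp)

/-- **Proposition 3.2, untwisted case** (`e` odd or `a > 0`, `e = 2^ν e₁` with `e₁` odd,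
`c = sgn(a)·a₁^{e₁}`): every square root `α` of `c` lies in `R_{2^{ν+1}}`; there is an
automorphism of `R_{2^{ν+1}}` fixing `ℚ^× ∩ R_{2^{ν+1}}` pointwise, restricting to the
identity on `R_{2^ν}`, and sending each such `α` to `−α`; and every automorphism of
`R_{2^{ν+2}}` fixing `ℚ^× ∩ R_{2^{ν+2}}` pointwise and restricting to the identity on
`R_{2^{ν+1}}` fixes each such `α`. (Equivalently, `s = ν₂(e)+1` is the smallest `k` for
which `ψ_{K,2}` factors through `A(2^k)`.) -/
theorem psi_factoring_untwisted
    (a : ℤ) (ha : a ≠ 0) (ha1 : a ≠ 1) (ham1 : a ≠ -1)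
    (e : ℕ) (a₀ : ℤ)
    (he : IsGreatest {m : ℕ | 0 < m ∧ ∃ b : ℕ, |a| = (b : ℤ) ^ m} e)
    (ha₀ : |a₀| ^ e = |a|) (hsgn : a₀.sign = a.sign)
    (huntw : Odd e ∨ 0 < a)
    (ν e₁ : ℕ) (hν : ν = padicValNat 2 e) (he₁ : Odd e₁)
    (hee : e = 2 ^ ν * e₁)
    (a₁ : ℕ) (ha₁ : ((a₁ : ℤ)) ^ e = |a|)
    (c : ℤ) (hc : c = a.sign * ((a₁ : ℤ)) ^ e₁) :
    (∀ α : Qbarˣ, ((α : Qbar)) ^ 2 = (c : Qbar) → α ∈ radical a ha (2 ^ (ν + 1))) ∧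
    (∃ τ ∈ autGroup a ha (2 ^ (ν + 1)),
      (∀ x : ↥(radical a ha (2 ^ (ν + 1))),
          (x : Qbarˣ) ∈ radical a ha (2 ^ ν) → τ x = x) ∧
      ∀ (α : Qbarˣ) (hmem : α ∈ radical a ha (2 ^ (ν + 1))),
        ((α : Qbar)) ^ 2 = (c : Qbar) →
          ((τ ⟨α, hmem⟩ : Qbarˣ) : Qbar) = -(α : Qbar)) ∧
    (∀ τ' ∈ autGroup a ha (2 ^ (ν + 2)),
      (∀ x : ↥(radical a ha (2 ^ (ν + 2))),
          (x : Qbarˣ) ∈ radical a ha (2 ^ (ν + 1)) → τ' x = x) →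
      ∀ (α : Qbarˣ) (hmem : α ∈ radical a ha (2 ^ (ν + 2))),
        ((α : Qbar)) ^ 2 = (c : Qbar) →
          ((τ' ⟨α, hmem⟩ : Qbarˣ) : Qbar) = (α : Qbar)) :=
  psi_factoring_untwisted_general a ha ha1 ham1 e he huntw ν e₁ he₁ hee a₁ ha₁ c hc
end
end

section
/- Suppose a is not a perfect square and the discriminant d of ℚ(√a) is odd (equivalently, a_sf ≡ 1 (mod 4)). Then E_a = 1 + ∏_{p ∣ 2d} (−1)/([ℚ(ζ_p, a^{1/p}) : ℚ] − 1), the product being over the primes dividing 2d. -/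
/-
For a prime `p`, the fields `ℚ(ζ_p)` and `ℚ(a^{1/p})` have degrees `p - 1` and `1` or `p`, so by
coprimality `[ℚ(ζ_p, a^{1/p}) : ℚ]` is `p - 1` when `a` is a `p`-th power, i.e. when `p ∣ h`, and
`p (p - 1)` otherwise. Hence for `p ∣ a_sf` the factor `-1 / ([ℚ(ζ_p, a^{1/p}) : ℚ] - 1)` is
`μ(p)` times the factor of `E_a` at `p`, while the factor at `p = 2` is `-1` because `a` is not a
square. An odd discriminant means `d = a_sf`, which is squarefree by the maximality of `b`, so
multiplicativity of `μ` turns the product over `p ∣ 2d` into `-μ(|a_sf|) ∏_{p ∣ a_sf} (…)`.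
-/

noncomputable section

/-- `K_n = ℚ(ζ_n, a^{1/n})`, realized as the subfield of `Q̄` generated by all
`n`-th roots of `a` together with the primitive `n`-th roots of unity. -/
def KummerField (a : ℤ) (n : ℕ) : IntermediateField ℚ Qbar :=
  IntermediateField.adjoin ℚ
    ({x : Qbar | x ^ n = (a : Qbar)} ∪ {x : Qbar | IsPrimitiveRoot x n})

/-- `[K_n : ℚ]`. -/
def kummerDeg (a : ℤ) (n : ℕ) : ℕ := Module.finrank ℚ ↥(KummerField a n)

open IntermediateField Polynomial ArithmeticFunction

theorem Rat.exists_int_pow_eq_of_pow_eq_intCast {q : ℚ} {n : ℕ} {a : ℤ} (h : q ^ n = a) :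
    ∃ c : ℤ, a = c ^ n := by
  refine ⟨q.num, ?_⟩
  rcases eq_or_ne n 0 with rfl | hn
  · simpa using h.symm
  have hden : q.den = 1 := by
    have := congrArg Rat.den h
    rwa [Rat.den_pow, Rat.den_intCast, pow_eq_one_iff, or_iff_left hn] at this
  have hq : q = q.num := ((Rat.den_eq_one_iff q).1 hden).symm
  exact_mod_cast (hq ▸ h).symm

theorem exists_pow_mul_eq_of_coprime {G : Type*} [CommGroupWithZero G] {x : G} (hx : x ≠ 0)
    {m n : ℕ} (hmn : m.Coprime n) {c d : G} (hc : c ^ m = x) (hd : d ^ n = x) :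
    ∃ e : G, e ^ (m * n) = x := by
  refine ⟨d ^ m.gcdA n * c ^ m.gcdB n, ?_⟩
  have hbez : (m : ℤ) * m.gcdA n + n * m.gcdB n = 1 := by
    rw [← Nat.gcd_eq_gcd_ab, hmn.gcd_eq_one, Nat.cast_one]
  calc (d ^ m.gcdA n * c ^ m.gcdB n) ^ (m * n)
      = ((d ^ n) ^ (m * m.gcdA n)) * ((c ^ m) ^ (n * m.gcdB n)) := by
        simp only [← zpow_natCast, mul_zpow, ← zpow_mul]
        push_cast; ring_nf
    _ = x := by
        rw [hc, hd, ← zpow_add₀ hx, hbez, zpow_one]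

theorem Int.exists_pow_mul_eq_of_coprime {a : ℤ} (ha : a ≠ 0) {m n : ℕ} (hmn : m.Coprime n)
    (hm : ∃ c : ℤ, a = c ^ m) (hn : ∃ c : ℤ, a = c ^ n) : ∃ c : ℤ, a = c ^ (m * n) := by
  obtain ⟨c, rfl⟩ := hm
  obtain ⟨d, hd⟩ := hn
  obtain ⟨e, he⟩ := _root_.exists_pow_mul_eq_of_coprime (x := ((c ^ m : ℤ) : ℚ))
    (by exact_mod_cast ha) hmn (c := c) (d := d) (by push_cast; rfl) (by rw [hd]; push_cast; rfl)
  exact Rat.exists_int_pow_eq_of_pow_eq_intCast he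

theorem exists_pow_eq_iff_dvd_of_isGreatest {a : ℤ} (ha : a ≠ 0) {h : ℕ}
    (hh : IsGreatest {m : ℕ | 0 < m ∧ ∃ c : ℤ, a = c ^ m} h) {p : ℕ} (hp : p.Prime) :
    (∃ c : ℤ, a = c ^ p) ↔ p ∣ h := by
  obtain ⟨⟨hpos, c, hc⟩, hmax⟩ := hh
  refine ⟨fun hpow ↦ by_contra fun hndvd ↦ ?_,
    fun ⟨k, hk⟩ ↦ ⟨c ^ k, by rw [hc, hk, ← pow_mul, mul_comm]⟩⟩
  have := hmax ⟨Nat.mul_pos hp.pos hpos,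
    Int.exists_pow_mul_eq_of_coprime ha (hp.coprime_iff_not_dvd.2 hndvd) hpow ⟨c, hc⟩⟩
  nlinarith [hp.two_le]

theorem squarefree_natAbs_of_isGreatest {a asf : ℤ} {b : ℕ}
    (hb : IsGreatest {c : ℕ | 0 < c ∧ (c : ℤ) ^ 2 ∣ a} b) (hasf : a = asf * b ^ 2) :
    Squarefree asf.natAbs := by
  rw [Nat.squarefree_iff_prime_squarefree]
  intro q hq hqq
  have hdvd : ((q * b : ℕ) : ℤ) ^ 2 ∣ a := by
    rw [hasf, Nat.cast_mul, mul_pow, sq (q : ℤ)]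
    exact mul_dvd_mul_right (by exact_mod_cast Int.natCast_dvd.2 hqq) _
  have := hb.2 ⟨Nat.mul_pos hq.pos hb.1.1, hdvd⟩
  nlinarith [hq.two_le, hb.1.1]

theorem Nat.primeFactors_two_mul {n : ℕ} (hn : n ≠ 0) :
    (2 * n).primeFactors = insert 2 n.primeFactors := by
  rw [primeFactors_mul two_ne_zero hn, prime_two.primeFactors, Finset.insert_eq]

theorem finrank_adjoin_primitiveRoot {L : Type*} [Field L] [CharZero L] {n : ℕ} (hn : 0 < n)
    {ζ : L} (hζ : IsPrimitiveRoot ζ n) : Module.finrank ℚ ℚ⟮ζ⟯ = n.totient := by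
  rw [adjoin.finrank (hζ.isIntegral hn).tower_top, ← cyclotomic_eq_minpoly_rat hζ hn,
    natDegree_cyclotomic]

theorem irreducible_X_pow_sub_C_of_not_exists_pow {a : ℤ} {p : ℕ} (hp : p.Prime)
    (ha : ¬∃ c : ℤ, a = c ^ p) : Irreducible (X ^ p - C (a : ℚ)) :=
  X_pow_sub_C_irreducible_of_prime hp fun _ hq ↦ ha (Rat.exists_int_pow_eq_of_pow_eq_intCast hq)

theorem finrank_adjoin_root_of_not_exists_pow {L : Type*} [Field L] [CharZero L] {a : ℤ} {p : ℕ}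
    (hp : p.Prime) (ha : ¬∃ c : ℤ, a = c ^ p) {r : L} (hr : r ^ p = a) :
    Module.finrank ℚ ℚ⟮r⟯ = p := by
  have hmonic := monic_X_pow_sub_C (a : ℚ) hp.ne_zero
  have hroot : aeval r (X ^ p - C (a : ℚ)) = 0 := by simp [hr]
  rw [adjoin.finrank ⟨_, hmonic, by rwa [← aeval_def]⟩,
    ← minpoly.eq_of_irreducible_of_monic (irreducible_X_pow_sub_C_of_not_exists_pow hp ha) hroot
      hmonic, natDegree_X_pow_sub_C]

theorem kummerField_eq_sup {a : ℤ} (ha : a ≠ 0) {n : ℕ} [NeZero n] {ζ r : Qbar}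
    (hζ : IsPrimitiveRoot ζ n) (hr : r ^ n = a) : KummerField a n = ℚ⟮ζ⟯ ⊔ ℚ⟮r⟯ := by
  have hr0 : r ≠ 0 := by
    rintro rfl
    exact ha (by exact_mod_cast hr.symm.trans (zero_pow (NeZero.ne n)))
  have hζmem : ζ ∈ ℚ⟮ζ⟯ ⊔ ℚ⟮r⟯ := le_sup_left (a := ℚ⟮ζ⟯) (mem_adjoin_simple_self ℚ ζ)
  have hrmem : r ∈ ℚ⟮ζ⟯ ⊔ ℚ⟮r⟯ := le_sup_right (a := ℚ⟮ζ⟯) (mem_adjoin_simple_self ℚ r)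
  apply le_antisymm
  · rw [KummerField, adjoin_le_iff]
    rintro x (hx | hx)
    · have hxr : (x / r) ^ n = 1 := by rw [div_pow, hx, ← hr, div_self (pow_ne_zero n hr0)]
      obtain ⟨i, -, hi⟩ := hζ.eq_pow_of_pow_eq_one hxr
      rw [← div_mul_cancel₀ x hr0, ← hi]
      exact mul_mem (pow_mem hζmem i) hrmem
    · obtain ⟨i, -, hi⟩ := hζ.eq_pow_of_pow_eq_one hx.pow_eq_one
      rw [← hi]
      exact pow_mem hζmem i
  · rw [sup_le_iff, adjoin_simple_le_iff, adjoin_simple_le_iff]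
    exact ⟨subset_adjoin _ _ (Or.inr hζ), subset_adjoin _ _ (Or.inl hr)⟩

theorem exists_primitiveRoot_and_pow_eq (a : ℤ) (n : ℕ) [NeZero n] :
    ∃ ζ r : Qbar, IsPrimitiveRoot ζ n ∧ r ^ n = a :=
  ⟨_, _, (HasEnoughRootsOfUnity.exists_primitiveRoot Qbar n).choose_spec,
    (IsAlgClosed.exists_pow_nat_eq (a : Qbar) (NeZero.pos n)).choose_spec⟩

theorem kummerDeg_of_eq_pow {a : ℤ} (ha : a ≠ 0) {n : ℕ} [NeZero n] {c : ℤ} (hc : a = c ^ n) :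
    kummerDeg a n = n.totient := by
  obtain ⟨ζ, -, hζ, -⟩ := exists_primitiveRoot_and_pow_eq a n
  have hcn : (c : Qbar) ^ n = a := by rw [hc]; push_cast; rfl
  rw [kummerDeg, kummerField_eq_sup ha hζ hcn,
    (adjoin_simple_eq_bot_iff.2 (intCast_mem ⊥ c)), sup_bot_eq,
    finrank_adjoin_primitiveRoot (NeZero.pos n) hζ]

theorem kummerDeg_of_not_exists_pow {a : ℤ} (ha : a ≠ 0) {p : ℕ} (hp : p.Prime)
    (hc : ¬∃ c : ℤ, a = c ^ p) : kummerDeg a p = (p - 1) * p := by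
  have : NeZero p := ⟨hp.ne_zero⟩
  obtain ⟨ζ, r, hζ, hr⟩ := exists_primitiveRoot_and_pow_eq a p
  have hζdeg : Module.finrank ℚ ℚ⟮ζ⟯ = p - 1 := by
    rw [finrank_adjoin_primitiveRoot hp.pos hζ, Nat.totient_prime hp]
  have hrdeg := finrank_adjoin_root_of_not_exists_pow hp hc hr
  have hcop : (Module.finrank ℚ ℚ⟮ζ⟯).Coprime (Module.finrank ℚ ℚ⟮r⟯) := by
    rw [hζdeg, hrdeg]
    exact (Nat.coprime_self_sub_left hp.one_le).2 (Nat.coprime_one_left p)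
  rw [kummerDeg, kummerField_eq_sup ha hζ hr, (LinearDisjoint.of_finrank_coprime hcop).finrank_sup,
    hζdeg, hrdeg]

theorem neg_one_div_kummerDeg_sub_one {a : ℤ} (ha : a ≠ 0) {h : ℕ}
    (hh : IsGreatest {m : ℕ | 0 < m ∧ ∃ c : ℤ, a = c ^ m} h) {p : ℕ} (hp : p.Prime) :
    (-1 : ℝ) / ((kummerDeg a p : ℝ) - 1) =
      ((moebius p : ℤ) : ℝ) * (if p ∣ h then 1 / ((p : ℝ) - 2) else 1 / ((p : ℝ) ^ 2 - p - 1)) := by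
  have : NeZero p := ⟨hp.ne_zero⟩
  rw [moebius_apply_prime hp]
  by_cases hdvd : p ∣ h
  · obtain ⟨c, hc⟩ := (exists_pow_eq_iff_dvd_of_isGreatest ha hh hp).2 hdvd
    rw [if_pos hdvd, kummerDeg_of_eq_pow ha hc, Nat.totient_prime hp, Nat.cast_sub hp.one_le]
    push_cast; ring
  · have hpow := mt (exists_pow_eq_iff_dvd_of_isGreatest ha hh hp).1 hdvd
    rw [if_neg hdvd, kummerDeg_of_not_exists_pow ha hp hpow, Nat.cast_mul, Nat.cast_sub hp.one_le]
    push_cast; ring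

open ArithmeticFunction in
theorem correction_factor_product_general
    (a : ℤ)
    -- `a` is not a perfect square
    (hnsq : ¬ ∃ c : ℤ, a = c ^ 2)
    -- `h` is the largest positive integer for which `a` is a perfect `h`-th power
    (h : ℕ) (hh : IsGreatest {m : ℕ | 0 < m ∧ ∃ c : ℤ, a = c ^ m} h)
    -- `a = a_sf · b²` with `b` the largest positive integer whose square divides `a`
    (b : ℕ) (hb : IsGreatest {c : ℕ | 0 < c ∧ ((c : ℤ)) ^ 2 ∣ a} b)
    (asf : ℤ) (hasf : a = asf * (b : ℤ) ^ 2)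
    -- `d` is the discriminant of `ℚ(√a) = ℚ(√a_sf)`, assumed odd
    (d : ℤ) (hd : d = if asf % 4 = 1 then asf else 4 * asf) (hodd : Odd d) :
    1 - ((moebius asf.natAbs : ℤ) : ℝ) *
        ∏ p ∈ asf.natAbs.primeFactors,
          (if p ∣ h then 1 / ((p : ℝ) - 2) else 1 / ((p : ℝ) ^ 2 - (p : ℝ) - 1)) =
      1 + ∏ p ∈ (2 * d).natAbs.primeFactors, (-1 : ℝ) / ((kummerDeg a p : ℝ) - 1) := by
  have ha : a ≠ 0 := by rintro rfl; exact hnsq ⟨0, by ring⟩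
  have hdasf : d = asf := by
    split_ifs at hd
    · exact hd
    · exact absurd hodd (by rw [hd, Int.not_odd_iff_even]; exact ⟨2 * asf, by ring⟩)
  have hodd' : Odd asf.natAbs := Int.natAbs_odd.2 (hdasf ▸ hodd)
  have h2 : 2 ∉ asf.natAbs.primeFactors := fun h2 ↦
    hodd'.not_two_dvd_nat (Nat.dvd_of_mem_primeFactors h2)
  have hdeg2 : kummerDeg a 2 = 2 := kummerDeg_of_not_exists_pow ha Nat.prime_two hnsq
  rw [hdasf, show (2 * asf).natAbs = 2 * asf.natAbs from Int.natAbs_mul 2 asf,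
    Nat.primeFactors_two_mul hodd'.pos.ne', Finset.prod_insert h2, hdeg2,
    Finset.prod_congr rfl fun p hp ↦
      neg_one_div_kummerDeg_sub_one ha hh (Nat.prime_of_mem_primeFactors hp),
    Finset.prod_mul_distrib, ← Int.cast_prod,
    isMultiplicative_moebius.prod_primeFactors (squarefree_natAbs_of_isGreatest hb hasf)]
  norm_num
  ring

open ArithmeticFunction in
/-- **Lenstra–Moree–Stevenhagen, Theorem 4.2 form of the correction factor**: if `a` is not
a perfect square and the discriminant `d` of `ℚ(√a)` is odd (equivalently
`a_sf ≡ 1 (mod 4)`), then `E_a = 1 + ∏_{p ∣ 2d} (−1)/([ℚ(ζ_p, a^{1/p}) : ℚ] − 1)`. -/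
theorem correction_factor_product
    (a : ℤ) (ha0 : a ≠ 0) (ha1 : a ≠ 1) (ham1 : a ≠ -1)
    -- `a` is not a perfect square
    (hnsq : ¬ ∃ c : ℤ, a = c ^ 2)
    -- `h` is the largest positive integer for which `a` is a perfect `h`-th power
    (h : ℕ) (hh : IsGreatest {m : ℕ | 0 < m ∧ ∃ c : ℤ, a = c ^ m} h)
    -- `a = a_sf · b²` with `b` the largest positive integer whose square divides `a`
    (b : ℕ) (hb : IsGreatest {c : ℕ | 0 < c ∧ ((c : ℤ)) ^ 2 ∣ a} b)
    (asf : ℤ) (hasf : a = asf * (b : ℤ) ^ 2)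
    -- `d` is the discriminant of `ℚ(√a) = ℚ(√a_sf)`, assumed odd
    (d : ℤ) (hd : d = if asf % 4 = 1 then asf else 4 * asf) (hodd : Odd d) :
    1 - ((moebius asf.natAbs : ℤ) : ℝ) *
        ∏ p ∈ asf.natAbs.primeFactors,
          (if p ∣ h then 1 / ((p : ℝ) - 2) else 1 / ((p : ℝ) ^ 2 - (p : ℝ) - 1)) =
      1 + ∏ p ∈ (2 * d).natAbs.primeFactors, (-1 : ℝ) / ((kummerDeg a p : ℝ) - 1) :=
  correction_factor_product_general a hnsq h hh b hb asf hasf d hd hodd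
end
end
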